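/- arXiv:funct-an/9511002 — 11 statements merged into one kernel-verified Lean document; each statement's English description precedes it below -/
import Mathlib

section
/- Let H be a complex Hilbert space, q ∈ ℝ, and let a : H →L[ℂ] H be a bounded operator whose adjoint a* satisfies a ∘ a* − q • (a* ∘ a) = 1. Then for every n ∈ ℕ, a^n ∘ (a*)^n = P_n(a* ∘ a), where P_n is the polynomial P_n(x) = ∏_{j=1}^{n} (q^j x + [j]_q) (a polynomial of degree n with constant coefficient [n]_q!), evaluated at the operator a* ∘ a. -/
open ContinuousLinearMap Polynomial

noncomputable def qInt (q : ℝ) (n : ℕ) : ℝ := ∑ j ∈ Finset.range n, q ^ j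

theorem pow_q_commutation_polynomial
    {H : Type*} [NormedAddCommGroup H] [InnerProductSpace ℂ H] [CompleteSpace H]
    (q : ℝ) (a : H →L[ℂ] H)
    (hq : a ∘L adjoint a - (q : ℂ) • (adjoint a ∘L a) = 1) :
    ∀ n : ℕ,
      (a ^ n) ∘L ((adjoint a) ^ n)
        = Polynomial.aeval (adjoint a ∘L a)
            (∏ j ∈ Finset.range n,
              (Polynomial.C ((q : ℂ) ^ (j + 1)) * Polynomial.X
                + Polynomial.C ((qInt q (j + 1) : ℝ) : ℂ))) := by
  set N : H →L[ℂ] H := adjoint a ∘L a with hNdef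
  set M : H →L[ℂ] H := 1 + (q : ℂ) • N with hMdef
  have haa : a * adjoint a = M := by
    rw [sub_eq_iff_eq_add] at hq
    rw [hMdef]
    simpa [mul_def, add_comm] using hq
  have haN : a * N = M * a := by
    have hN' : N = adjoint a * a := rfl
    rw [hN', ← mul_assoc, haa]
  have hpow : ∀ k : ℕ, a * N ^ k = M ^ k * a := by
    intro k
    induction k with
    | zero => simp
    | succ k ih =>
      rw [pow_succ, ← mul_assoc, ih, mul_assoc, haN, ← mul_assoc, ← pow_succ]
  have key : ∀ p : ℂ[X], a * aeval N p = aeval M p * a := by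
    intro p
    induction p using Polynomial.induction_on' with
    | add p r hp hr => simp [mul_add, add_mul, hp, hr]
    | monomial k c =>
      simp only [aeval_monomial]
      rw [← mul_assoc, ← Algebra.commutes c a, mul_assoc, hpow, ← mul_assoc]
  -- the shift polynomial
  set g : ℂ[X] := Polynomial.C (q : ℂ) * Polynomial.X + 1 with hgdef
  have hgN : aeval N g = M := by
    simp [hgdef, hMdef, Algebra.smul_def, add_comm]
  set f : ℕ → ℂ[X] := fun j =>
    Polynomial.C ((q : ℂ) ^ (j + 1)) * Polynomial.X
      + Polynomial.C ((qInt q (j + 1) : ℝ) : ℂ) with hfdef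
  have hf0 : f 0 = g := by
    simp [hfdef, hgdef, qInt]
  have hcomp : ∀ j, (f j).comp g = f (j + 1) := by
    intro j
    have hqint : (qInt q (j + 2) : ℂ) = (q : ℂ) ^ (j + 1) + (qInt q (j + 1) : ℂ) := by
      simp only [qInt, Finset.sum_range_succ]
      push_cast
      ring
    simp only [hfdef, hgdef, Polynomial.add_comp, Polynomial.mul_comp, Polynomial.C_comp,
      Polynomial.X_comp, Polynomial.one_comp]
    rw [hqint]
    simp only [map_add, map_pow]
    ring
  intro n
  induction n with
  | zero => simp [ContinuousLinearMap.one_def]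
  | succ n ih =>
    have h1 : (a ^ (n + 1)) ∘L (adjoint a ^ (n + 1))
        = a * ((a ^ n) ∘L (adjoint a ^ n)) * adjoint a := by
      rw [pow_succ' a n, pow_succ (adjoint a) n]
      simp only [← mul_def, mul_assoc]
    have hprod : (∏ j ∈ Finset.range (n + 1), f j)
        = (∏ j ∈ Finset.range n, f j).comp g * g := by
      rw [Finset.prod_range_succ' f n, hf0]
      congr 1
      rw [Polynomial.prod_comp]
      exact (Finset.prod_congr rfl fun j _ => hcomp j).symm
    rw [h1, ih, key, mul_assoc, haa, hprod, map_mul, Polynomial.aeval_comp, hgN]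
end

section
/- Let H be a complex Hilbert space, q ∈ ℝ, and let a : H →L[ℂ] H be a bounded operator whose adjoint a* satisfies a ∘ a* − q • (a* ∘ a) = 1. Then for every φ ∈ ker a and every n ∈ ℕ, ‖(a*)^n φ‖² = [n]_q! · ‖φ‖². In particular, on ker a the operator (a*)^n acts as a multiple of an isometry. -/
open ContinuousLinearMap

noncomputable def qFact (q : ℝ) (n : ℕ) : ℝ := ∏ j ∈ Finset.range n, qInt q (j + 1)

lemma qInt_succ (q : ℝ) (n : ℕ) : qInt q (n + 1) = 1 + q * qInt q n := by
  rw [qInt, qInt, Finset.sum_range_succ', Finset.mul_sum, add_comm]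
  simp [pow_succ, mul_comm]

theorem norm_adjoint_pow_on_ker
    {H : Type*} [NormedAddCommGroup H] [InnerProductSpace ℂ H] [CompleteSpace H]
    (q : ℝ) (a : H →L[ℂ] H)
    (hq : a ∘L adjoint a - (q : ℂ) • (adjoint a ∘L a) = 1) :
    ∀ φ : H, a φ = 0 → ∀ n : ℕ,
      ‖((adjoint a) ^ n) φ‖ ^ 2 = qFact q n * ‖φ‖ ^ 2 := by
  intro φ hφ
  have hcomm : ∀ x : H, a (adjoint a x) = x + (q : ℂ) • (adjoint a (a x)) := by
    intro x
    have h := ContinuousLinearMap.ext_iff.mp hq x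
    rw [sub_apply, smul_apply, comp_apply, comp_apply, one_apply_eq_self] at h
    exact sub_eq_iff_eq_add.mp h
  have key : ∀ n : ℕ, a (((adjoint a) ^ (n + 1)) φ) =
      ((qInt q (n + 1) : ℂ)) • (((adjoint a) ^ n) φ) := by
    intro n
    induction n with
    | zero =>
      simp [pow_succ, hcomm, hφ, qInt]
    | succ n ih =>
      have h0 : ((adjoint a) ^ (n + 2)) φ = adjoint a (((adjoint a) ^ (n + 1)) φ) := by
        rw [pow_succ']; rfl
      have h4 : adjoint a (((adjoint a) ^ n) φ) = ((adjoint a) ^ (n + 1)) φ := by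
        rw [pow_succ']; rfl
      rw [h0, hcomm, ih, map_smul, h4, qInt_succ q (n + 1)]
      push_cast
      rw [add_smul, one_smul, smul_smul]
  intro n
  induction n with
  | zero => simp [qFact]
  | succ n ih =>
    have h1 : (((adjoint a) ^ (n + 1)) φ) = adjoint a (((adjoint a) ^ n) φ) := by
      rw [pow_succ']; rfl
    have h2 : (inner ℂ (((adjoint a) ^ (n + 1)) φ) (((adjoint a) ^ (n + 1)) φ) : ℂ) =
        (qInt q (n + 1) : ℂ) * inner ℂ (((adjoint a) ^ n) φ) (((adjoint a) ^ n) φ) := by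
      calc (inner ℂ (((adjoint a) ^ (n + 1)) φ) (((adjoint a) ^ (n + 1)) φ) : ℂ)
          = inner ℂ (adjoint a (((adjoint a) ^ n) φ)) (((adjoint a) ^ (n + 1)) φ) := by rw [← h1]
        _ = inner ℂ (((adjoint a) ^ n) φ) (a (((adjoint a) ^ (n + 1)) φ)) := by
            rw [adjoint_inner_left]
        _ = inner ℂ (((adjoint a) ^ n) φ)
              (((qInt q (n + 1) : ℂ)) • (((adjoint a) ^ n) φ)) := by rw [key n]
        _ = (qInt q (n + 1) : ℂ) *
              inner ℂ (((adjoint a) ^ n) φ) (((adjoint a) ^ n) φ) := by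
            rw [inner_smul_right]
    have h3 : ‖((adjoint a) ^ (n + 1)) φ‖ ^ 2 =
        qInt q (n + 1) * ‖((adjoint a) ^ n) φ‖ ^ 2 := by
      have h5 := congrArg Complex.re h2
      rw [norm_sq_eq_re_inner (𝕜 := ℂ), norm_sq_eq_re_inner (𝕜 := ℂ)]
      simpa [Complex.mul_re] using h5
    rw [h3, ih]
    simp only [qFact, Finset.prod_range_succ]
    ring
end

section
/- Let H be a complex Hilbert space, q ∈ ℝ, and let a : H →L[ℂ] H be a bounded operator whose adjoint a* satisfies a ∘ a* − q • (a* ∘ a) = 1. Then for all φ, ψ ∈ ker a and all n, m ∈ ℕ, ⟨(a*)^n φ, (a*)^m ψ⟩ = δ_{n,m} · [n]_q! · ⟨φ, ψ⟩; in particular the subspaces (a*)^n(ker a) and (a*)^m(ker a) are orthogonal whenever n ≠ m. -/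
open ContinuousLinearMap

lemma a_pow_adjoint {H : Type*} [NormedAddCommGroup H] [InnerProductSpace ℂ H]
    [CompleteSpace H] (q : ℝ) (a : H →L[ℂ] H)
    (hq : a ∘L adjoint a - (q : ℂ) • (adjoint a ∘L a) = 1)
    (ψ : H) (hψ : a ψ = 0) : ∀ m : ℕ,
    a (((adjoint a) ^ (m + 1)) ψ) = ((qInt q (m + 1) : ℝ) : ℂ) • ((adjoint a) ^ m) ψ := by
  have key : ∀ x : H, a (adjoint a x) = x + (q : ℂ) • adjoint a (a x) := by
    intro x
    have := congrArg (fun T : H →L[ℂ] H => T x) hq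
    simpa [sub_eq_iff_eq_add] using this
  intro m
  induction m with
  | zero =>
    simp only [pow_succ', pow_zero, one_apply, mul_apply, key, hψ, map_zero, smul_zero,
      add_zero, qInt_succ, qInt]
    norm_num
    simpa [hψ] using key ψ
  | succ m ih =>
    have h1 : ((adjoint a) ^ (m + 2)) ψ = adjoint a (((adjoint a) ^ (m + 1)) ψ) := by
      rw [pow_succ']; rfl
    have h2 : ((adjoint a) ^ (m + 1)) ψ = adjoint a (((adjoint a) ^ m) ψ) := by
      rw [pow_succ']; rfl
    rw [h1, key, ih, map_smul, ← h2, qInt_succ q (m + 1)]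
    push_cast
    module

theorem inner_adjoint_pow_on_ker
    {H : Type*} [NormedAddCommGroup H] [InnerProductSpace ℂ H] [CompleteSpace H]
    (q : ℝ) (a : H →L[ℂ] H)
    (hq : a ∘L adjoint a - (q : ℂ) • (adjoint a ∘L a) = 1) :
    ∀ φ ψ : H, a φ = 0 → a ψ = 0 → ∀ n m : ℕ,
      (inner ℂ (((adjoint a) ^ n) φ) (((adjoint a) ^ m) ψ) : ℂ)
        = (if n = m then ((qFact q n : ℝ) : ℂ) else 0) * (inner ℂ φ ψ : ℂ) := by
  intro φ ψ hφ hψ n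
  induction n with
  | zero =>
    intro m
    cases m with
    | zero => simp [qFact]
    | succ m =>
      have h2 : ((adjoint a) ^ (m + 1)) ψ = adjoint a (((adjoint a) ^ m) ψ) := by
        rw [pow_succ']; rfl
      simp [h2, adjoint_inner_right, hφ]
  | succ n ih =>
    intro m
    cases m with
    | zero =>
      have h2 : ((adjoint a) ^ (n + 1)) φ = adjoint a (((adjoint a) ^ n) φ) := by
        rw [pow_succ']; rfl
      simp [h2, adjoint_inner_left, hψ]
    | succ m =>
      have h2 : ((adjoint a) ^ (m + 1)) ψ = adjoint a (((adjoint a) ^ m) ψ) := by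
        rw [pow_succ']; rfl
      rw [h2, adjoint_inner_right, a_pow_adjoint q a hq φ hφ n, inner_smul_left, ih m]
      have : (starRingEnd ℂ) ((qInt q (n + 1) : ℝ) : ℂ) = ((qInt q (n + 1) : ℝ) : ℂ) := by
        simp [Complex.conj_ofReal]
      rw [this]
      by_cases h : n = m
      · subst h
        simp only [if_pos rfl, qFact, Finset.prod_range_succ]
        push_cast
        ring
      · simp [h, Nat.succ_ne_succ]
end

section
/- Let H be a complex Hilbert space, q ∈ (0,1), and let a : H →L[ℂ] H be a bounded operator whose adjoint a* satisfies a ∘ a* − q • (a* ∘ a) = 1. Then for every n ∈ ℕ, the image K_n = {(a*)^n φ : φ ∈ ker a} is a closed linear subspace of H. -/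
open ContinuousLinearMap

theorem adjoint_pow_image_ker_isClosed
    {H : Type*} [NormedAddCommGroup H] [InnerProductSpace ℂ H] [CompleteSpace H]
    (q : ℝ) (hq : q ∈ Set.Ioo (0 : ℝ) 1) (a : H →L[ℂ] H)
    (hcomm : a ∘L adjoint a - (q : ℂ) • (adjoint a ∘L a) = 1) :
    ∀ n : ℕ,
      IsClosed ((Submodule.map ((((adjoint a) ^ n) : H →L[ℂ] H) : H →ₗ[ℂ] H)
        (LinearMap.ker (a : H →ₗ[ℂ] H)) : Set H)) := by
  -- key inequality : ‖x‖ ≤ ‖adjoint a x‖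
  have key : ∀ x : H, ‖x‖ ≤ ‖adjoint a x‖ := by
    intro x
    have hx : a (adjoint a x) = x + (q : ℂ) • (adjoint a (a x)) := by
      have := congrArg (fun T : H →L[ℂ] H => T x) hcomm
      simp only [sub_apply, comp_apply, smul_apply, one_apply, ContinuousLinearMap.one_apply] at this
      linear_combination (norm := module) this
    have h1 : (inner ℂ (adjoint a x) (adjoint a x) : ℂ)
        = inner ℂ x x + (q : ℂ) * inner ℂ (a x) (a x) := by
      rw [adjoint_inner_left, hx, inner_add_right, inner_smul_right,
        adjoint_inner_right]
    have h2 : ‖adjoint a x‖ ^ 2 = ‖x‖ ^ 2 + q * ‖a x‖ ^ 2 := by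
      have e : ∀ y : H, ‖y‖ ^ 2 = RCLike.re (inner ℂ y y : ℂ) :=
        fun y => (inner_self_eq_norm_sq y).symm
      rw [e (adjoint a x), e x, e (a x), h1, map_add]
      congr 1
      simp [RCLike.mul_re]
    have hq0 : 0 < q := hq.1
    have hsq : ‖x‖ ^ 2 ≤ ‖adjoint a x‖ ^ 2 := by nlinarith [sq_nonneg ‖a x‖]
    exact le_of_pow_le_pow_left₀ two_ne_zero (norm_nonneg _) hsq
  -- hence ‖x‖ ≤ ‖(adjoint a)^n x‖
  have keyn : ∀ n : ℕ, ∀ x : H, ‖x‖ ≤ ‖((adjoint a) ^ n) x‖ := by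
    intro n
    induction n with
    | zero => intro x; simp
    | succ n ih =>
      intro x
      have : ((adjoint a) ^ (n + 1)) x = adjoint a (((adjoint a) ^ n) x) := by
        rw [pow_succ']
        simp
      rw [this]
      exact (ih x).trans (key _)
  intro n
  -- restriction of (adjoint a)^n to ker a
  set f : ↥(LinearMap.ker (a : H →ₗ[ℂ] H)) →L[ℂ] H :=
    ((adjoint a) ^ n).comp (LinearMap.ker (a : H →ₗ[ℂ] H)).subtypeL with hf
  have hanti : AntilipschitzWith 1 f := by
    apply ContinuousLinearMap.antilipschitz_of_bound
    intro x
    simpa [hf] using keyn n (x : H)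
  have hcomplete : CompleteSpace ↥(LinearMap.ker (a : H →ₗ[ℂ] H)) := by
    have : IsClosed (LinearMap.ker (a : H →ₗ[ℂ] H) : Set H) := by
      exact (ContinuousLinearMap.isClosed_ker a)
    exact this.completeSpace_coe
  have hrange : Set.range f
      = (Submodule.map ((((adjoint a) ^ n) : H →L[ℂ] H) : H →ₗ[ℂ] H)
        (LinearMap.ker (a : H →ₗ[ℂ] H)) : Set H) := by
    ext y
    simp only [Set.mem_range, SetLike.mem_coe, Submodule.mem_map]
    constructor
    · rintro ⟨x, rfl⟩
      exact ⟨x, x.2, rfl⟩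
    · rintro ⟨x, hx, rfl⟩
      exact ⟨⟨x, hx⟩, rfl⟩
  rw [← hrange]
  exact hanti.isClosed_range f.uniformContinuous
end

section
/- Let H be a complex Hilbert space, q ∈ (0,1), and let a : H →L[ℂ] H be a bounded operator whose adjoint a* satisfies a ∘ a* − q • (a* ∘ a) = 1. Suppose ψ ∈ H is orthogonal to (a*)^n φ for every n ∈ ℕ and every φ ∈ ker a. Then ψ is orthogonal to ker(a^n) for every n ∈ ℕ. -/
open ContinuousLinearMap

set_option maxHeartbeats 1000000

theorem orthogonal_to_adjoint_pow_ker
    {H : Type*} [NormedAddCommGroup H] [InnerProductSpace ℂ H] [CompleteSpace H]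
    (q : ℝ) (hq : q ∈ Set.Ioo (0 : ℝ) 1) (a : H →L[ℂ] H)
    (hcomm : a ∘L adjoint a - (q : ℂ) • (adjoint a ∘L a) = 1)
    (ψ : H)
    (hψ : ∀ (n : ℕ) (φ : H), a φ = 0 → (inner ℂ ψ (((adjoint a) ^ n) φ) : ℂ) = 0) :
    ∀ (n : ℕ) (θ : H), (a ^ n) θ = 0 → (inner ℂ ψ θ : ℂ) = 0 := by
  obtain ⟨hq0, hq1⟩ := hq
  set b := adjoint a with hb
  have hT : a ∘L b = 1 + (q : ℂ) • (b ∘L a) := by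
    rw [← hcomm]; abel
  set T : H →L[ℂ] H := a ∘L b with hTdef
  -- key inner product identity
  have key : ∀ x : H, (inner ℂ (T x) x : ℂ) = ((‖x‖ ^ 2 + q * ‖a x‖ ^ 2 : ℝ) : ℂ) := by
    intro x
    have : T x = x + (q : ℂ) • (b (a x)) := by
      rw [hT]; simp
    rw [this, inner_add_left, inner_smul_left, hb, adjoint_inner_left,
      inner_self_eq_norm_sq_to_K, inner_self_eq_norm_sq_to_K, Complex.conj_ofReal]
    norm_num
  -- lower bound  ‖x‖ ≤ ‖T x‖
  have hbound : ∀ x : H, ‖x‖ ≤ 1 * ‖T x‖ := by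
    intro x
    have h1 : ‖x‖ ^ 2 ≤ ‖(inner ℂ (T x) x : ℂ)‖ := by
      rw [key x, Complex.norm_real, Real.norm_eq_abs]
      have : ‖x‖ ^ 2 + q * ‖a x‖ ^ 2 ≤ |‖x‖ ^ 2 + q * ‖a x‖ ^ 2| := le_abs_self _
      nlinarith [mul_nonneg hq0.le (sq_nonneg (‖a x‖))]
    have h2 : ‖(inner ℂ (T x) x : ℂ)‖ ≤ ‖T x‖ * ‖x‖ := norm_inner_le_norm _ _
    rcases eq_or_ne x 0 with rfl | hx
    · simp
    · have hxpos : 0 < ‖x‖ := norm_pos_iff.mpr hx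
      have := h1.trans h2
      rw [one_mul]
      nlinarith
  -- surjectivity of T
  have hsurj : Function.Surjective T := by
    have hanti : AntilipschitzWith 1 T := T.antilipschitz_of_bound (by simpa using hbound)
    have hcl : IsClosed (Set.range T) := hanti.isClosed_range T.uniformContinuous
    set S : Submodule ℂ H := LinearMap.range (T : H →ₗ[ℂ] H) with hS
    have hScl : IsClosed (S : Set H) := by
      have hEq : (S : Set H) = Set.range T := by
        ext x; simp [hS, LinearMap.mem_range]
      rw [hEq]; exact hcl
    haveI : CompleteSpace S := hScl.completeSpace_coe
    have horth : Sᗮ = ⊥ := by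
      rw [Submodule.eq_bot_iff]
      intro y hy
      have h0 : (inner ℂ (T y) y : ℂ) = 0 := hy (T y) (LinearMap.mem_range_self _ y)
      rw [key y] at h0
      have h0' : ‖y‖ ^ 2 + q * ‖a y‖ ^ 2 = 0 := by exact_mod_cast h0
      have : ‖y‖ ^ 2 = 0 := by nlinarith [mul_nonneg hq0.le (sq_nonneg (‖a y‖))]
      simpa using (pow_eq_zero_iff (n := 2) (by norm_num)).mp this
    have hStop : S = ⊤ := Submodule.orthogonal_eq_bot_iff.mp horth
    intro z
    obtain ⟨w, hw⟩ := (hStop ▸ Submodule.mem_top : z ∈ S)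
    exact ⟨w, hw⟩
  -- q-commutation identity
  set c : ℕ → ℂ := fun m => ∑ j ∈ Finset.range m, (q : ℂ) ^ j with hc
  have hcpos : ∀ m : ℕ, 0 < ∑ j ∈ Finset.range (m + 1), q ^ j :=
    fun m => Finset.sum_pos (fun j _ => pow_pos hq0 j) (by simp)
  have hcR : ∀ m : ℕ, c m = ((∑ j ∈ Finset.range m, q ^ j : ℝ) : ℂ) := by
    intro m; push_cast [hc]; rfl
  have comm : ∀ m : ℕ, a ^ (m + 1) * b = (q : ℂ) ^ (m + 1) • (b * a ^ (m + 1))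
      + c (m + 1) • (a ^ m) := by
    intro m
    induction m with
    | zero =>
      have hc1 : c 1 = 1 := by simp [hc]
      simp only [zero_add, pow_one, pow_zero, hc1, one_smul]
      have hab : a * b = T := rfl
      have hba : b ∘L a = b * a := rfl
      rw [hab, hT, hba]; abel
    | succ m ih =>
      have h1 : a ^ (m + 2) * b = a * (a ^ (m + 1) * b) := by
        rw [← mul_assoc, ← pow_succ']
      rw [h1, ih, mul_add, mul_smul_comm, mul_smul_comm, ← mul_assoc]
      have h2 : a * b = (q : ℂ) • (b * a) + 1 := by
        have hab : a * b = T := rfl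
        have hba : b ∘L a = b * a := rfl
        rw [hab, hT, hba]; abel
      rw [h2]
      have h3 : c (m + 2) = c (m + 1) + (q : ℂ) ^ (m + 1) := by
        simp [hc, Finset.sum_range_succ]
      rw [h3]
      simp only [add_mul, smul_mul_assoc, one_mul, smul_add, smul_smul]
      rw [mul_assoc b a (a ^ (m + 1)), ← pow_succ' a (m + 1), ← pow_succ' a m]
      module
  -- main strengthened induction
  have main : ∀ n : ℕ, ∀ θ : H, (a ^ n) θ = 0 → ∀ m : ℕ, (inner ℂ ψ ((b ^ m) θ) : ℂ) = 0 := by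
    intro n
    induction n with
    | zero =>
      intro θ hθ m
      simp only [pow_zero, ContinuousLinearMap.one_apply] at hθ
      simp [hθ]
    | succ n ih =>
      intro θ hθ m
      obtain ⟨η, hη⟩ := hsurj (a θ)
      set φ := θ - b η with hφdef
      have hφ : a φ = 0 := by
        have : T η = a (b η) := rfl
        simp [hφdef, map_sub, ← this, hη]
      -- a^(n+1) φ = 0
      have hφn : (a ^ (n + 1)) φ = 0 := by
        have : (a ^ (n + 1)) φ = (a ^ n) (a φ) := by
          rw [pow_succ]; rfl
        rw [this, hφ, map_zero]
      -- apply comm n to η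
      have hcomm_η : (0 : H) = (q : ℂ) ^ (n + 1) • b ((a ^ (n + 1)) η)
          + c (n + 1) • (a ^ n) η := by
        have h := congrArg (fun f : H →L[ℂ] H => f η) (comm n)
        simp only [ContinuousLinearMap.mul_apply, add_apply, smul_apply] at h
        have hbη : b η = θ - φ := by rw [hφdef]; abel
        rw [← h]
        show (0 : H) = (a ^ (n+1)) (b η)
        rw [hbη, map_sub, hθ, hφn, sub_zero]
      set v := (a ^ (n + 1)) η with hv
      have hav : a ((a ^ n) η) = v := by
        rw [hv, pow_succ']; rfl
      -- apply a to hcomm_η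
      have h5 : (0 : H) = (q : ℂ) ^ (n + 1) • a (b v) + c (n + 1) • v := by
        have := congrArg a hcomm_η
        rw [map_zero, map_add, map_smul, map_smul, hav] at this
        exact this
      -- inner ℂ with v
      have hinner : (inner ℂ (a (b v)) v : ℂ) = (‖b v‖ : ℂ) ^ 2 := by
        rw [← adjoint_inner_right, ← hb, inner_self_eq_norm_sq_to_K]
        norm_num
      have h6 : (0 : ℂ) = (q : ℂ) ^ (n + 1) * ((‖b v‖ : ℂ) ^ 2)
          + ((∑ j ∈ Finset.range (n + 1), q ^ j : ℝ) : ℂ) * ((‖v‖ : ℂ) ^ 2) := by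
        have h := congrArg (fun w => (inner ℂ w v : ℂ)) h5
        simp only [inner_zero_left, inner_add_left, inner_smul_left, map_pow,
          Complex.conj_ofReal, hcR] at h
        rw [hinner, inner_self_eq_norm_sq_to_K] at h
        exact h
      have h7 : (0 : ℝ) = q ^ (n + 1) * ‖b v‖ ^ 2
          + (∑ j ∈ Finset.range (n + 1), q ^ j) * ‖v‖ ^ 2 := by
        exact_mod_cast h6
      have hv0 : v = 0 := by
        have h8 : ‖v‖ ^ 2 = 0 := by
          nlinarith [hcpos n, pow_pos hq0 (n + 1), sq_nonneg (‖b v‖), sq_nonneg (‖v‖),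
            mul_nonneg (pow_pos hq0 (n+1)).le (sq_nonneg (‖b v‖)),
            mul_nonneg (hcpos n).le (sq_nonneg (‖v‖))]
        simpa using (pow_eq_zero_iff (n := 2) (by norm_num)).mp h8
      have hηn : (a ^ n) η = 0 := by
        have h9 : c (n + 1) • (a ^ n) η = 0 := by
          have h := hcomm_η
          rw [hv0] at h
          simpa using h.symm
        have hc0 : c (n + 1) ≠ 0 := by
          rw [hcR]
          exact_mod_cast (hcpos n).ne'
        exact (smul_eq_zero.mp h9).resolve_left hc0
      -- conclude
      have hsplit : (b ^ m) θ = (b ^ m) φ + (b ^ (m + 1)) η := by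
        have : (b ^ (m + 1)) η = (b ^ m) (b η) := by rw [pow_succ]; rfl
        rw [this, hφdef, map_sub]; abel
      rw [hsplit, inner_add_right, hψ m φ hφ, ih η hηn (m + 1), add_zero]
  intro n θ hθ
  have := main n θ hθ 0
  simpa using this
end

section
/- Let H be a complex Hilbert space, q ∈ ℝ, and let a₀, a₁ : H →L[ℂ] H be bounded operators satisfying aᵢ ∘ aⱼ* − q • (aⱼ* ∘ aᵢ) = δ_{i,j} • 1 for i, j ∈ {0,1}. Let Ω ∈ H be a unit vector with a₀Ω = a₁Ω = 0. Then for every k ∈ ℕ, ⟨(a₀*)^k a₁* Ω, a₁* (a₀*)^k Ω⟩ = q^k · [k]_q!. -/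
open ContinuousLinearMap

theorem inner_mixed_creation_vectors
    {H : Type*} [NormedAddCommGroup H] [InnerProductSpace ℂ H] [CompleteSpace H]
    (q : ℝ) (a₀ a₁ : H →L[ℂ] H)
    (h00 : a₀ ∘L adjoint a₀ - (q : ℂ) • (adjoint a₀ ∘L a₀) = 1)
    (h01 : a₀ ∘L adjoint a₁ - (q : ℂ) • (adjoint a₁ ∘L a₀) = 0)
    (h10 : a₁ ∘L adjoint a₀ - (q : ℂ) • (adjoint a₀ ∘L a₁) = 0)
    (h11 : a₁ ∘L adjoint a₁ - (q : ℂ) • (adjoint a₁ ∘L a₁) = 1)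
    (Ω : H) (hΩ : ‖Ω‖ = 1) (hvac₀ : a₀ Ω = 0) (hvac₁ : a₁ Ω = 0) :
    ∀ k : ℕ,
      (inner ℂ (((adjoint a₀) ^ k) (adjoint a₁ Ω)) (adjoint a₁ (((adjoint a₀) ^ k) Ω)) : ℂ)
        = ((q ^ k * qFact q k : ℝ) : ℂ) := by
  set A := adjoint a₀ with hA
  set B := adjoint a₁ with hB
  -- commutation of a₁ with A
  have comm1 : ∀ x : H, a₁ (A x) = (q : ℂ) • A (a₁ x) := by
    intro x
    have := congrArg (fun T : H →L[ℂ] H => T x) h10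
    simp only [sub_apply, coe_comp', Function.comp_apply, smul_apply, zero_apply] at this
    exact sub_eq_zero.mp this
  have comm0 : ∀ x : H, a₀ (A x) = x + (q : ℂ) • A (a₀ x) := by
    intro x
    have := congrArg (fun T : H →L[ℂ] H => T x) h00
    simp only [sub_apply, coe_comp', Function.comp_apply, smul_apply, ContinuousLinearMap.one_apply] at this
    linear_combination (norm := module) this
  have commB : a₁ (B Ω) = Ω := by
    have := congrArg (fun T : H →L[ℂ] H => T Ω) h11
    simp only [sub_apply, coe_comp', Function.comp_apply, smul_apply, one_apply,
      hvac₁, map_zero, smul_zero, sub_zero] at this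
    exact this
  -- commutation of a₁ with A^k
  have commpow : ∀ k : ℕ, ∀ x : H, a₁ ((A ^ k) x) = ((q : ℂ) ^ k) • (A ^ k) (a₁ x) := by
    intro k
    induction k with
    | zero => intro x; simp
    | succ n ih =>
      intro x
      have h1 : (A ^ (n + 1)) x = (A ^ n) (A x) := by
        rw [pow_succ]; rfl
      have h2 : (A ^ (n + 1)) (a₁ x) = (A ^ n) (A (a₁ x)) := by
        rw [pow_succ]; rfl
      rw [h1, ih (A x), comm1 x, map_smul, h2, smul_smul, pow_succ]
  -- action of a₀ on A^(k+1) Ω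
  have qIntsucc : ∀ k : ℕ, qInt q (k + 1) = 1 + q * qInt q k := by
    intro k
    simp only [qInt, Finset.sum_range_succ', pow_succ', pow_zero, ← Finset.mul_sum]
    ring
  have annih : ∀ k : ℕ, a₀ ((A ^ (k + 1)) Ω) = ((qInt q (k + 1) : ℝ) : ℂ) • (A ^ k) Ω := by
    intro k
    induction k with
    | zero =>
      have : (A ^ 1) Ω = A Ω := by simp
      rw [this, comm0 Ω, hvac₀]
      simp [qInt]
    | succ n ih =>
      have h1 : (A ^ (n + 2)) Ω = A ((A ^ (n + 1)) Ω) := by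
        rw [pow_succ']; rfl
      have h2 : (A ^ (n + 1)) Ω = A ((A ^ n) Ω) := by
        rw [pow_succ']; rfl
      rw [h1, comm0, ih, map_smul, ← h2, smul_smul, qIntsucc (n + 1)]
      push_cast
      module
  -- norms
  have normsq : ∀ k : ℕ,
      (inner ℂ ((A ^ k) Ω) ((A ^ k) Ω) : ℂ) = ((qFact q k : ℝ) : ℂ) := by
    intro k
    induction k with
    | zero =>
      simp [qFact, inner_self_eq_norm_sq_to_K, hΩ]
    | succ n ih =>
      have h2 : (A ^ (n + 1)) Ω = A ((A ^ n) Ω) := by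
        rw [pow_succ']; rfl
      rw [h2, hA, adjoint_inner_left, ← h2, annih n, inner_smul_right, ih]
      have hp : qFact q (n + 1) = qFact q n * qInt q (n + 1) := Finset.prod_range_succ _ _
      rw [hp]
      push_cast
      ring
  intro k
  have key : a₁ ((A ^ k) (B Ω)) = ((q : ℂ) ^ k) • (A ^ k) Ω := by
    rw [commpow k (B Ω), commB]
  rw [hB, adjoint_inner_right, key, inner_smul_left, normsq k]
  push_cast
  simp [← Complex.ofReal_pow, Complex.conj_ofReal]
end

section
/- Let H be a complex Hilbert space, q ∈ ℝ, and let a₀, a₁ : H →L[ℂ] H be bounded operators satisfying aᵢ ∘ aⱼ* − q • (aⱼ* ∘ aᵢ) = δ_{i,j} • 1 for i, j ∈ {0,1}. Let Ω ∈ H be a unit vector with a₀Ω = a₁Ω = 0. Then for every k ∈ ℕ, ‖(a₀*)^k a₁* Ω + a₁* (a₀*)^k Ω‖² = 2 (1 + q^k) [k]_q!. -/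
open ContinuousLinearMap

local notation "⟪" x ", " y "⟫" => @inner ℂ _ _ x y

theorem norm_sq_symmetrized_creation_vector
    {H : Type*} [NormedAddCommGroup H] [InnerProductSpace ℂ H] [CompleteSpace H]
    (q : ℝ) (a₀ a₁ : H →L[ℂ] H)
    (h00 : a₀ ∘L adjoint a₀ - (q : ℂ) • (adjoint a₀ ∘L a₀) = 1)
    (h01 : a₀ ∘L adjoint a₁ - (q : ℂ) • (adjoint a₁ ∘L a₀) = 0)
    (h10 : a₁ ∘L adjoint a₀ - (q : ℂ) • (adjoint a₀ ∘L a₁) = 0)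
    (h11 : a₁ ∘L adjoint a₁ - (q : ℂ) • (adjoint a₁ ∘L a₁) = 1)
    (Ω : H) (hΩ : ‖Ω‖ = 1) (hvac₀ : a₀ Ω = 0) (hvac₁ : a₁ Ω = 0) :
    ∀ k : ℕ,
      ‖((adjoint a₀) ^ k) (adjoint a₁ Ω) + adjoint a₁ (((adjoint a₀) ^ k) Ω)‖ ^ 2
        = 2 * (1 + q ^ k) * qFact q k := by
  intro k
  set b₀ := adjoint a₀ with hb₀
  set b₁ := adjoint a₁ with hb₁
  -- pointwise commutation relations
  have h00' : ∀ x : H, a₀ (b₀ x) = (q:ℂ) • b₀ (a₀ x) + x := by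
    intro x
    have h := ContinuousLinearMap.ext_iff.mp h00 x
    simp only [sub_apply, comp_apply, smul_apply, one_apply] at h
    rw [sub_eq_iff_eq_add] at h
    rw [h, ContinuousLinearMap.one_apply]; abel
  have h01' : ∀ x : H, a₀ (b₁ x) = (q:ℂ) • b₁ (a₀ x) := by
    intro x
    have h := ContinuousLinearMap.ext_iff.mp h01 x
    simp only [sub_apply, comp_apply, smul_apply, zero_apply] at h
    exact sub_eq_zero.mp h
  have h10' : ∀ x : H, a₁ (b₀ x) = (q:ℂ) • b₀ (a₁ x) := by
    intro x
    have h := ContinuousLinearMap.ext_iff.mp h10 x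
    simp only [sub_apply, comp_apply, smul_apply, zero_apply] at h
    exact sub_eq_zero.mp h
  have h11' : ∀ x : H, a₁ (b₁ x) = (q:ℂ) • b₁ (a₁ x) + x := by
    intro x
    have h := ContinuousLinearMap.ext_iff.mp h11 x
    simp only [sub_apply, comp_apply, smul_apply, one_apply] at h
    rw [sub_eq_iff_eq_add] at h
    rw [h, ContinuousLinearMap.one_apply]; abel
  -- a₁ through powers of b₀
  have comm1 : ∀ n : ℕ, ∀ x : H, a₁ ((b₀ ^ n) x) = ((q:ℂ) ^ n) • (b₀ ^ n) (a₁ x) := by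
    intro n
    induction n with
    | zero => intro x; simp
    | succ n ih =>
      intro x
      have hpow : (b₀ ^ (n + 1)) x = b₀ ((b₀ ^ n) x) := by
        rw [pow_succ']; rfl
      have hpow2 : ∀ y : H, (b₀ ^ (n + 1)) y = b₀ ((b₀ ^ n) y) := by
        intro y; rw [pow_succ']; rfl
      rw [hpow, h10', ih, map_smul, hpow2, smul_smul, pow_succ']
  have adj0 : ∀ x y : H, ⟪b₀ x, y⟫ = ⟪x, a₀ y⟫ := fun x y =>
    ContinuousLinearMap.adjoint_inner_left a₀ y x
  have adj1 : ∀ x y : H, ⟪b₁ x, y⟫ = ⟪x, a₁ y⟫ := fun x y =>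
    ContinuousLinearMap.adjoint_inner_left a₁ y x
  -- a₀ through powers of b₀ on a₀-vacuum vectors
  have comm0 : ∀ n : ℕ, ∀ x : H, a₀ x = 0 →
      a₀ ((b₀ ^ (n + 1)) x) = ((qInt q (n + 1) : ℝ) : ℂ) • (b₀ ^ n) x := by
    intro n
    induction n with
    | zero =>
      intro x hx
      have hpow : (b₀ ^ 1) x = b₀ x := by simp
      rw [hpow, h00', hx]
      simp [qInt]
    | succ n ih =>
      intro x hx
      have hpow : (b₀ ^ (n + 2)) x = b₀ ((b₀ ^ (n + 1)) x) := by
        rw [pow_succ']; rfl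
      have hpow2 : (b₀ ^ (n + 1)) x = b₀ ((b₀ ^ n) x) := by
        rw [pow_succ']; rfl
      have hq : qInt q (n + 2) = q * qInt q (n + 1) + 1 := by
        simp only [qInt]
        rw [geom_sum_succ]
      rw [hpow, h00', ih x hx, map_smul, hpow2, smul_smul, ← hpow2, hq]
      push_cast
      rw [add_smul, one_smul]
  -- norms of b₀^n x for a₀-vacuum vectors
  have hnorm : ∀ n : ℕ, ∀ x : H, a₀ x = 0 →
      ⟪(b₀ ^ n) x, (b₀ ^ n) x⟫ = ((qFact q n : ℝ) : ℂ) * ⟪x, x⟫ := by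
    intro n
    induction n with
    | zero => intro x hx; simp [qFact]
    | succ n ih =>
      intro x hx
      have hpow : (b₀ ^ (n + 1)) x = b₀ ((b₀ ^ n) x) := by
        rw [pow_succ']; rfl
      calc ⟪(b₀ ^ (n + 1)) x, (b₀ ^ (n + 1)) x⟫
          = ⟪(b₀ ^ n) x, a₀ ((b₀ ^ (n + 1)) x)⟫ := by
            conv_lhs => rw [hpow, adj0, ← hpow]
        _ = ((qInt q (n + 1) : ℝ) : ℂ) * ⟪(b₀ ^ n) x, (b₀ ^ n) x⟫ := by
            rw [comm0 n x hx, inner_smul_right]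
        _ = ((qFact q (n + 1) : ℝ) : ℂ) * ⟪x, x⟫ := by
            rw [ih x hx]
            have : qFact q (n + 1) = qFact q n * qInt q (n + 1) := by
              simp [qFact, Finset.prod_range_succ]
            rw [this]
            push_cast
            ring
  -- basic vacuum facts
  have hΩΩ : ⟪Ω, Ω⟫ = 1 := by
    rw [inner_self_eq_norm_sq_to_K, hΩ]
    norm_num
  have ha₀b₁Ω : a₀ (b₁ Ω) = 0 := by rw [h01', hvac₀, map_zero, smul_zero]
  have ha₁b₁Ω : a₁ (b₁ Ω) = Ω := by rw [h11', hvac₁, map_zero, smul_zero, zero_add]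
  have hb₁ΩΩ : ⟪b₁ Ω, b₁ Ω⟫ = 1 := by
    rw [adj1, ha₁b₁Ω, hΩΩ]
  set u := (b₀ ^ k) (b₁ Ω) with hu
  set v := b₁ ((b₀ ^ k) Ω) with hv
  have huu : ⟪u, u⟫ = ((qFact q k : ℝ) : ℂ) := by
    rw [hu, hnorm k (b₁ Ω) ha₀b₁Ω, hb₁ΩΩ, mul_one]
  have ha₁bkΩ : a₁ ((b₀ ^ k) Ω) = 0 := by
    rw [comm1, hvac₁, map_zero, smul_zero]
  have hvv : ⟪v, v⟫ = ((qFact q k : ℝ) : ℂ) := by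
    rw [hv, adj1, h11', ha₁bkΩ, map_zero, smul_zero, zero_add,
      hnorm k Ω hvac₀, hΩΩ, mul_one]
  have hvu : ⟪v, u⟫ = ((q ^ k * qFact q k : ℝ) : ℂ) := by
    rw [hv, hu, adj1, comm1, ha₁b₁Ω, inner_smul_right, hnorm k Ω hvac₀, hΩΩ, mul_one]
    push_cast
    ring
  have huv : ⟪u, v⟫ = ((q ^ k * qFact q k : ℝ) : ℂ) := by
    rw [← inner_conj_symm, hvu]
    exact Complex.conj_ofReal _
  -- assemble
  have hexp : ‖u + v‖ ^ 2 = Complex.re ⟪u, u⟫ + 2 * Complex.re ⟪u, v⟫ + Complex.re ⟪v, v⟫ := by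
    rw [@norm_add_sq ℂ, ← @inner_self_eq_norm_sq ℂ, ← @inner_self_eq_norm_sq ℂ]
    rfl
  rw [hexp, huu, hvv, huv]
  simp only [Complex.ofReal_re]
  ring
end

section
/- Let H be a complex Hilbert space, q ∈ ℝ, and let a₀, a₁ : H →L[ℂ] H be bounded operators satisfying aᵢ ∘ aⱼ* − q • (aⱼ* ∘ aᵢ) = δ_{i,j} • 1 for i, j ∈ {0,1}. Let Ω ∈ H be a unit vector with a₀Ω = a₁Ω = 0. Let W : H →L[ℂ] H be a self-adjoint unitary (W* = W and W ∘ W = 1) such that Wφ = φ for every φ ∈ ker a₀. Set X₀ = a₀ + a₀*, X₁ = a₁ + a₁*, and Y = W ∘ X₀ ∘ W. Then ‖(Y² + X₁²) Ω‖² = 6 + 2q. -/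
open ContinuousLinearMap

theorem norm_sq_diagonal_part
    {H : Type*} [NormedAddCommGroup H] [InnerProductSpace ℂ H] [CompleteSpace H]
    (q : ℝ) (a₀ a₁ : H →L[ℂ] H)
    (h00 : a₀ ∘L adjoint a₀ - (q : ℂ) • (adjoint a₀ ∘L a₀) = 1)
    (h01 : a₀ ∘L adjoint a₁ - (q : ℂ) • (adjoint a₁ ∘L a₀) = 0)
    (h10 : a₁ ∘L adjoint a₀ - (q : ℂ) • (adjoint a₀ ∘L a₁) = 0)
    (h11 : a₁ ∘L adjoint a₁ - (q : ℂ) • (adjoint a₁ ∘L a₁) = 1)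
    (Ω : H) (hΩ : ‖Ω‖ = 1) (hvac₀ : a₀ Ω = 0) (hvac₁ : a₁ Ω = 0)
    (W : H →L[ℂ] H) (hWsa : adjoint W = W) (hWunit : W ∘L W = 1)
    (hWker : ∀ φ : H, a₀ φ = 0 → W φ = φ) :
    ‖(((W ∘L (a₀ + adjoint a₀) ∘L W) ^ 2 + (a₁ + adjoint a₁) ^ 2)) Ω‖ ^ 2
      = 6 + 2 * q := by
  have e00 : ∀ x, a₀ (adjoint a₀ x) = x + (q : ℂ) • adjoint a₀ (a₀ x) := by
    intro x
    have h := congrArg (fun T : H →L[ℂ] H => T x) h00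
    simp only [sub_apply, smul_apply, comp_apply, one_apply_eq_self] at h
    linear_combination (norm := module) h
  have e01 : ∀ x, a₀ (adjoint a₁ x) = (q : ℂ) • adjoint a₁ (a₀ x) := by
    intro x
    have h := congrArg (fun T : H →L[ℂ] H => T x) h01
    simp only [sub_apply, smul_apply, comp_apply, zero_apply] at h
    linear_combination (norm := module) h
  have e10 : ∀ x, a₁ (adjoint a₀ x) = (q : ℂ) • adjoint a₀ (a₁ x) := by
    intro x
    have h := congrArg (fun T : H →L[ℂ] H => T x) h10
    simp only [sub_apply, smul_apply, comp_apply, zero_apply] at h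
    linear_combination (norm := module) h
  have e11 : ∀ x, a₁ (adjoint a₁ x) = x + (q : ℂ) • adjoint a₁ (a₁ x) := by
    intro x
    have h := congrArg (fun T : H →L[ℂ] H => T x) h11
    simp only [sub_apply, smul_apply, comp_apply, one_apply_eq_self] at h
    linear_combination (norm := module) h
  set u := adjoint a₀ (adjoint a₀ Ω) with hu_def
  set w := adjoint a₁ (adjoint a₁ Ω) with hw_def
  have hWΩ : W Ω = Ω := hWker Ω hvac₀
  have hWW : ∀ x, W (W x) = x := by
    intro x
    have h := congrArg (fun T : H →L[ℂ] H => T x) hWunit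
    simpa using h
  have hu0 : a₀ (adjoint a₀ Ω) = Ω := by
    rw [e00]; simp [hvac₀]
  have hw0 : a₁ (adjoint a₁ Ω) = Ω := by
    rw [e11]; simp [hvac₁]
  have hu1 : a₀ u = (1 + (q : ℂ)) • adjoint a₀ Ω := by
    rw [hu_def, e00, hu0]
    module
  have hw1 : a₁ w = (1 + (q : ℂ)) • adjoint a₁ Ω := by
    rw [hw_def, e11, hw0]
    module
  have ha₁u : a₁ u = 0 := by
    rw [hu_def, e10, e10, hvac₁]
    simp
  have ha₀w : a₀ w = 0 := by
    rw [hw_def, e01, e01, hvac₀]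
    simp
  have hWw : W w = w := hWker w ha₀w
  -- the vector
  have hv : (((W ∘L (a₀ + adjoint a₀) ∘L W) ^ 2 + (a₁ + adjoint a₁) ^ 2)) Ω
      = W ((2 : ℂ) • Ω + u + w) := by
    have lhs1 : ((W ∘L (a₀ + adjoint a₀) ∘L W) ^ 2) Ω = W (Ω + u) := by
      simp only [pow_two, comp_apply, add_apply, hWΩ, hvac₀, zero_add, mul_apply_eq_comp]
      rw [hWW]
      simp only [map_add, hu0]
      rfl
    have lhs2 : ((a₁ + adjoint a₁) ^ 2) Ω = Ω + w := by
      simp only [pow_two, mul_apply_eq_comp, add_apply, hvac₁, zero_add, map_add, hw0]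
      rfl
    rw [add_apply, lhs1, lhs2]
    simp only [map_add, map_smul, hWΩ, hWw]
    module
  rw [hv]
  -- W preserves inner ℂ products
  have hWinner : ∀ x y : H, (inner ℂ (W x) (W y) : ℂ) = inner ℂ x y := by
    intro x y
    calc (inner ℂ (W x) (W y) : ℂ) = inner ℂ (adjoint W x) (W y) := by rw [hWsa]
      _ = inner ℂ x (W (W y)) := adjoint_inner_left W (W y) x
      _ = inner ℂ x y := by rw [hWW]
  -- inner ℂ product facts
  have iΩΩ : (inner ℂ Ω Ω : ℂ) = 1 := by
    rw [inner_self_eq_norm_sq_to_K, hΩ]; norm_num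
  have iΩu : (inner ℂ Ω u : ℂ) = 0 := by
    rw [hu_def, adjoint_inner_right, hvac₀, inner_zero_left]
  have iuΩ : (inner ℂ u Ω : ℂ) = 0 := by
    rw [hu_def, adjoint_inner_left, hvac₀, inner_zero_right]
  have iΩw : (inner ℂ Ω w : ℂ) = 0 := by
    rw [hw_def, adjoint_inner_right, hvac₁, inner_zero_left]
  have iwΩ : (inner ℂ w Ω : ℂ) = 0 := by
    rw [hw_def, adjoint_inner_left, hvac₁, inner_zero_right]
  have iuw : (inner ℂ u w : ℂ) = 0 := by
    rw [hw_def, adjoint_inner_right, ha₁u, inner_zero_left]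
  have iwu : (inner ℂ w u : ℂ) = 0 := by
    rw [hw_def, adjoint_inner_left, ha₁u, inner_zero_right]
  have ibase₀ : (inner ℂ (adjoint a₀ Ω) (adjoint a₀ Ω) : ℂ) = 1 := by
    rw [adjoint_inner_left, hu0, iΩΩ]
  have ibase₁ : (inner ℂ (adjoint a₁ Ω) (adjoint a₁ Ω) : ℂ) = 1 := by
    rw [adjoint_inner_left, hw0, iΩΩ]
  have iuu : (inner ℂ u u : ℂ) = 1 + (q : ℂ) := by
    rw [hu_def, adjoint_inner_right]
    rw [show a₀ u = (1 + (q : ℂ)) • adjoint a₀ Ω from hu1]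
    rw [inner_smul_left, ibase₀]
    simp [Complex.conj_ofReal]
  have iww : (inner ℂ w w : ℂ) = 1 + (q : ℂ) := by
    rw [hw_def, adjoint_inner_right]
    rw [show a₁ w = (1 + (q : ℂ)) • adjoint a₁ Ω from hw1]
    rw [inner_smul_left, ibase₁]
    simp [Complex.conj_ofReal]
  have key : (inner ℂ (W ((2 : ℂ) • Ω + u + w)) (W ((2 : ℂ) • Ω + u + w)) : ℂ)
      = 6 + 2 * (q : ℂ) := by
    rw [hWinner]
    simp only [inner_add_left, inner_add_right, inner_smul_left, inner_smul_right,
      iΩΩ, iΩu, iuΩ, iΩw, iwΩ, iuw, iwu, iuu, iww]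
    simp [Complex.conj_ofReal, map_ofNat]
    ring
  rw [← @inner_self_eq_norm_sq ℂ, key]
  simp
end

section
/- Let H be a complex Hilbert space, q ∈ (0,1), and let a₀, a₁ : H →L[ℂ] H be bounded operators satisfying aᵢ ∘ aⱼ* − q • (aⱼ* ∘ aᵢ) = δ_{i,j} • 1 for i, j ∈ {0,1}. Let Ω ∈ H be a unit vector with a₀Ω = a₁Ω = 0. Let W : H →L[ℂ] H be a self-adjoint unitary such that Wφ = φ for every φ ∈ ker a₀, W maps the closed linear span of {(a₀*)^k Ω : k ∈ ℕ} into itself, and there is a sequence w : ℕ → ℝ such that for every φ ∈ ker a₀ the series ∑_{k=1}^∞ w_k (a₀*)^k φ converges in H to W(a₀* φ). Set X₀ = a₀ + a₀*, X₁ = a₁ + a₁*, Y = W ∘ X₀ ∘ W. Then the vectors (Y² + X₁²) Ω and (Y X₁ + X₁ Y) Ω are orthogonal, so that ‖(Y + X₁)² Ω‖² = ‖(Y² + X₁²) Ω‖² + ‖(Y X₁ + X₁ Y) Ω‖². -/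
open ContinuousLinearMap

set_option maxHeartbeats 1000000 in
theorem cross_terms_orthogonal
    {H : Type*} [NormedAddCommGroup H] [InnerProductSpace ℂ H] [CompleteSpace H]
    (q : ℝ) (hq : q ∈ Set.Ioo (0 : ℝ) 1) (a₀ a₁ : H →L[ℂ] H)
    (h00 : a₀ ∘L adjoint a₀ - (q : ℂ) • (adjoint a₀ ∘L a₀) = 1)
    (h01 : a₀ ∘L adjoint a₁ - (q : ℂ) • (adjoint a₁ ∘L a₀) = 0)
    (h10 : a₁ ∘L adjoint a₀ - (q : ℂ) • (adjoint a₀ ∘L a₁) = 0)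
    (h11 : a₁ ∘L adjoint a₁ - (q : ℂ) • (adjoint a₁ ∘L a₁) = 1)
    (Ω : H) (hΩ : ‖Ω‖ = 1) (hvac₀ : a₀ Ω = 0) (hvac₁ : a₁ Ω = 0)
    (W : H →L[ℂ] H) (hWsa : adjoint W = W) (hWunit : W ∘L W = 1)
    (hWker : ∀ φ : H, a₀ φ = 0 → W φ = φ)
    (hWinv : ∀ x ∈ (Submodule.span ℂ
        (Set.range fun k : ℕ => ((adjoint a₀) ^ k) Ω)).topologicalClosure,
      W x ∈ (Submodule.span ℂ
        (Set.range fun k : ℕ => ((adjoint a₀) ^ k) Ω)).topologicalClosure)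
    (w : ℕ → ℝ)
    (hW1 : ∀ φ : H, a₀ φ = 0 →
      HasSum (fun k : ℕ => ((w (k + 1) : ℂ)) • (((adjoint a₀) ^ (k + 1)) φ))
        (W (adjoint a₀ φ))) :
    (inner ℂ ((((W ∘L (a₀ + adjoint a₀) ∘L W) ^ 2 + (a₁ + adjoint a₁) ^ 2)) Ω)
       ((((W ∘L (a₀ + adjoint a₀) ∘L W) * (a₁ + adjoint a₁)
          + (a₁ + adjoint a₁) * (W ∘L (a₀ + adjoint a₀) ∘L W))) Ω) : ℂ) = 0 ∧
    ‖(((W ∘L (a₀ + adjoint a₀) ∘L W + (a₁ + adjoint a₁)) ^ 2)) Ω‖ ^ 2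
      = ‖(((W ∘L (a₀ + adjoint a₀) ∘L W) ^ 2 + (a₁ + adjoint a₁) ^ 2)) Ω‖ ^ 2
        + ‖(((W ∘L (a₀ + adjoint a₀) ∘L W) * (a₁ + adjoint a₁)
            + (a₁ + adjoint a₁) * (W ∘L (a₀ + adjoint a₀) ∘L W))) Ω‖ ^ 2 := by
  classical
  set Y : H →L[ℂ] H := W ∘L (a₀ + adjoint a₀) ∘L W with hY
  set B : H →L[ℂ] H := a₁ + adjoint a₁ with hB
  -- pointwise commutators
  have c00 : ∀ x : H, a₀ (adjoint a₀ x) = x + (q:ℂ) • adjoint a₀ (a₀ x) := by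
    intro x
    have h := ContinuousLinearMap.ext_iff.mp h00 x
    simp only [sub_apply, comp_apply, smul_apply, one_apply] at h
    exact sub_eq_iff_eq_add.mp h
  have c01 : ∀ x : H, a₀ (adjoint a₁ x) = (q:ℂ) • adjoint a₁ (a₀ x) := by
    intro x
    have h := ContinuousLinearMap.ext_iff.mp h01 x
    simp only [sub_apply, comp_apply, smul_apply, zero_apply] at h
    exact sub_eq_zero.mp h
  have c10 : ∀ x : H, a₁ (adjoint a₀ x) = (q:ℂ) • adjoint a₀ (a₁ x) := by
    intro x
    have h := ContinuousLinearMap.ext_iff.mp h10 x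
    simp only [sub_apply, comp_apply, smul_apply, zero_apply] at h
    exact sub_eq_zero.mp h
  have c11 : ∀ x : H, a₁ (adjoint a₁ x) = x + (q:ℂ) • adjoint a₁ (a₁ x) := by
    intro x
    have h := ContinuousLinearMap.ext_iff.mp h11 x
    simp only [sub_apply, comp_apply, smul_apply, one_apply] at h
    exact sub_eq_iff_eq_add.mp h
  set S0 : Submodule ℂ H := Submodule.span ℂ
      (Set.range fun k : ℕ => ((adjoint a₀) ^ k) Ω) with hS0
  set M : Submodule ℂ H := S0.topologicalClosure with hM
  have hgen : ∀ k : ℕ, ((adjoint a₀) ^ k) Ω ∈ S0 := fun k =>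
    Submodule.subset_span ⟨k, rfl⟩
  have hΩM : Ω ∈ M := S0.le_topologicalClosure (by simpa using hgen 0)
  -- adjoint a₀ maps S0 into S0
  have hadjS : ∀ x ∈ S0, adjoint a₀ x ∈ S0 := by
    intro x hx
    induction hx using Submodule.span_induction with
    | mem y hy =>
      obtain ⟨k, rfl⟩ := hy
      have : adjoint a₀ (((adjoint a₀) ^ k) Ω) = ((adjoint a₀) ^ (k+1)) Ω := by
        rw [pow_succ']; rfl
      rw [this]; exact hgen _
    | zero => simp
    | add y z _ _ hy hz => rw [map_add]; exact S0.add_mem hy hz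
    | smul c y _ hy => rw [map_smul]; exact S0.smul_mem c hy
  -- a₀ maps S0 into S0
  have ha0gen : ∀ k : ℕ, a₀ (((adjoint a₀) ^ k) Ω) ∈ S0 := by
    intro k
    induction k with
    | zero => simp [hvac₀]
    | succ n ih =>
      have h1 : ((adjoint a₀) ^ (n+1)) Ω = adjoint a₀ (((adjoint a₀) ^ n) Ω) := by
        rw [pow_succ']; rfl
      rw [h1, c00]
      exact S0.add_mem (hgen n) (S0.smul_mem _ (hadjS _ ih))
  have ha0S : ∀ x ∈ S0, a₀ x ∈ S0 := by
    intro x hx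
    induction hx using Submodule.span_induction with
    | mem y hy => obtain ⟨k, rfl⟩ := hy; exact ha0gen k
    | zero => simp
    | add y z _ _ hy hz => rw [map_add]; exact S0.add_mem hy hz
    | smul c y _ hy => rw [map_smul]; exact S0.smul_mem c hy
  -- extend to closure
  have extend : ∀ (T : H →L[ℂ] H), (∀ y ∈ S0, T y ∈ M) → ∀ x ∈ M, T x ∈ M := by
    intro T hsp x hx
    have hle : S0.topologicalClosure ≤ M.comap (T : H →ₗ[ℂ] H) := by
      refine Submodule.topologicalClosure_minimal _ (fun y hy => hsp y hy) ?_
      have hcl : IsClosed (M : Set H) := S0.isClosed_topologicalClosure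
      rw [Submodule.comap_coe]
      exact hcl.preimage T.continuous
    exact hle hx
  have hMa0 : ∀ x ∈ M, a₀ x ∈ M :=
    extend a₀ fun y hy => S0.le_topologicalClosure (ha0S y hy)
  have hMadj : ∀ x ∈ M, adjoint a₀ x ∈ M :=
    extend (adjoint a₀) fun y hy => S0.le_topologicalClosure (hadjS y hy)
  -- M ⊆ ker a₁
  have hker1gen : ∀ k : ℕ, a₁ (((adjoint a₀) ^ k) Ω) = 0 := by
    intro k
    induction k with
    | zero => simpa using hvac₁
    | succ n ih =>
      have h1 : ((adjoint a₀) ^ (n+1)) Ω = adjoint a₀ (((adjoint a₀) ^ n) Ω) := by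
        rw [pow_succ']; rfl
      rw [h1, c10, ih, map_zero, smul_zero]
  have hMker : ∀ x ∈ M, a₁ x = 0 := by
    intro x hx
    have hle : S0.topologicalClosure ≤ LinearMap.ker (a₁ : H →ₗ[ℂ] H) := by
      refine Submodule.topologicalClosure_minimal _ ?_ ?_
      · rw [Submodule.span_le]
        rintro y ⟨k, rfl⟩
        exact hker1gen k
      · exact ContinuousLinearMap.isClosed_ker a₁
    exact hle hx
  -- pow helpers
  have pinner : ∀ (n : ℕ) (x y : H),
      (inner ℂ x (((adjoint a₀) ^ n) y) : ℂ) = inner ℂ ((a₀ ^ n) x) y := by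
    intro n
    induction n with
    | zero => intro x y; simp
    | succ n ih =>
      intro x y
      have h1 : ((adjoint a₀) ^ (n+1)) y = ((adjoint a₀) ^ n) (adjoint a₀ y) := by
        rw [pow_succ]; rfl
      have h2 : (a₀ ^ (n+1)) x = a₀ ((a₀ ^ n) x) := by rw [pow_succ']; rfl
      rw [h1, ih, ContinuousLinearMap.adjoint_inner_right, h2]
  have hMpow : ∀ (n : ℕ) (x : H), x ∈ M → (a₀ ^ n) x ∈ M := by
    intro n
    induction n with
    | zero => intro x hx; simpa using hx
    | succ n ih =>
      intro x hx
      have h2 : (a₀ ^ (n+1)) x = a₀ ((a₀ ^ n) x) := by rw [pow_succ']; rfl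
      rw [h2]; exact hMa0 _ (ih x hx)
  -- basic vectors
  have hWΩ : W Ω = Ω := hWker Ω hvac₀
  have hYv : ∀ x : H, Y x = W ((a₀ + adjoint a₀) (W x)) := by
    intro x; rfl
  have hYΩ : Y Ω = W (adjoint a₀ Ω) := by
    rw [hYv, hWΩ]; simp [add_apply, hvac₀]
  have hYΩM : Y Ω ∈ M := by
    rw [hYΩ]
    exact hWinv _ (hMadj Ω hΩM)
  have hYM : ∀ x ∈ M, Y x ∈ M := by
    intro x hx
    rw [hYv]
    have hw := hWinv x hx
    have : (a₀ + adjoint a₀) (W x) ∈ M := by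
      rw [add_apply]
      exact M.add_mem (hMa0 _ hw) (hMadj _ hw)
    exact hWinv _ this
  have hY2M : Y (Y Ω) ∈ M := hYM _ hYΩM
  have hker0 : a₀ (adjoint a₁ Ω) = 0 := by
    rw [c01, hvac₀, map_zero, smul_zero]
  have hYB : Y (adjoint a₁ Ω) = W (adjoint a₀ (adjoint a₁ Ω)) := by
    rw [hYv, hWker _ hker0]
    simp [add_apply, hker0]
  have hMorth : ∀ x ∈ M, ∀ y : H, (inner ℂ x (adjoint a₁ y) : ℂ) = 0 := by
    intro x hx y
    rw [ContinuousLinearMap.adjoint_inner_right, hMker x hx, inner_zero_left]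
  -- pairing with the W-series
  have hsum0 : ∀ (φ x : H), a₀ φ = 0 →
      (∀ k : ℕ, (inner ℂ ((a₀ ^ (k+1)) x) φ : ℂ) = 0) →
      (inner ℂ x (W (adjoint a₀ φ)) : ℂ) = 0 := by
    intro φ x hφ hterm
    have hs := (innerSL ℂ x).hasSum (hW1 φ hφ)
    have h0 : (fun k : ℕ =>
        (innerSL ℂ x) ((w (k+1) : ℂ) • (((adjoint a₀) ^ (k+1)) φ))) =
        fun _ : ℕ => (0 : ℂ) := by
      funext k
      have : (innerSL ℂ x) ((w (k+1) : ℂ) • (((adjoint a₀) ^ (k+1)) φ))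
          = (w (k+1) : ℂ) * inner ℂ x (((adjoint a₀) ^ (k+1)) φ) := by
        simp [inner_smul_right]
      rw [this, pinner, hterm k, mul_zero]
    rw [h0] at hs
    simpa using hs.unique hasSum_zero
  -- the two vectors
  have hBΩ : B Ω = adjoint a₁ Ω := by
    rw [hB, add_apply, hvac₁, zero_add]
  have hu : ((Y ^ 2 + B ^ 2)) Ω
      = (Y (Y Ω) + Ω) + adjoint a₁ (adjoint a₁ Ω) := by
    have h1 : ((Y ^ 2 + B ^ 2)) Ω = Y (Y Ω) + B (B Ω) := by
      simp [pow_two, add_apply, mul_apply]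
    have h2 : B (B Ω) = Ω + adjoint a₁ (adjoint a₁ Ω) := by
      rw [hBΩ, hB, add_apply, c11, hvac₁, map_zero, smul_zero, add_zero]
    rw [h1, h2]
    abel
  have hv : ((Y * B + B * Y)) Ω
      = W (adjoint a₀ (adjoint a₁ Ω)) + adjoint a₁ (Y Ω) := by
    have h1 : ((Y * B + B * Y)) Ω = Y (B Ω) + B (Y Ω) := by
      simp [add_apply, mul_apply]
    rw [h1, hBΩ, hYB, hB, add_apply, hMker _ hYΩM, zero_add]
  -- orthogonality
  have hψ : Y (Y Ω) + Ω ∈ M := M.add_mem hY2M hΩM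
  have hξa₀ : a₀ (adjoint a₁ (adjoint a₁ Ω)) = 0 := by
    rw [c01, hker0, map_zero, smul_zero]
  have key : (inner ℂ (((Y ^ 2 + B ^ 2)) Ω) (((Y * B + B * Y)) Ω) : ℂ) = 0 := by
    rw [hu, hv]
    rw [inner_add_left, inner_add_right, inner_add_right]
    have t1 : (inner ℂ (Y (Y Ω) + Ω) (W (adjoint a₀ (adjoint a₁ Ω))) : ℂ) = 0 := by
      refine hsum0 _ _ hker0 ?_
      intro k
      exact hMorth _ (hMpow (k+1) _ hψ) Ω
    have t2 : (inner ℂ (Y (Y Ω) + Ω) (adjoint a₁ (Y Ω)) : ℂ) = 0 :=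
      hMorth _ hψ _
    have t3 : (inner ℂ (adjoint a₁ (adjoint a₁ Ω))
        (W (adjoint a₀ (adjoint a₁ Ω))) : ℂ) = 0 := by
      refine hsum0 _ _ hker0 ?_
      intro k
      have hz : (a₀ ^ (k+1)) (adjoint a₁ (adjoint a₁ Ω)) = 0 := by
        rw [pow_succ, ContinuousLinearMap.mul_apply, hξa₀, map_zero]
      rw [hz, inner_zero_left]
    have t4 : (inner ℂ (adjoint a₁ (adjoint a₁ Ω)) (adjoint a₁ (Y Ω)) : ℂ) = 0 := by
      rw [ContinuousLinearMap.adjoint_inner_right]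
      have hone : a₁ (adjoint a₁ Ω) = Ω := by
        rw [c11, hvac₁, map_zero, smul_zero, add_zero]
      have ha : a₁ (adjoint a₁ (adjoint a₁ Ω))
          = adjoint a₁ Ω + (q : ℂ) • adjoint a₁ Ω := by
        rw [c11, hone]
      have hz : (inner ℂ (adjoint a₁ Ω) (Y Ω) : ℂ) = 0 := by
        rw [ContinuousLinearMap.adjoint_inner_left, hMker _ hYΩM, inner_zero_right]
      rw [ha, inner_add_left, inner_smul_left, hz, mul_zero, add_zero]
    rw [t1, t2, t3, t4]
    ring
  refine ⟨key, ?_⟩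
  have hexp : (Y + B) ^ 2 = (Y ^ 2 + B ^ 2) + (Y * B + B * Y) := by noncomm_ring
  have happ : ((Y + B) ^ 2) Ω
      = ((Y ^ 2 + B ^ 2)) Ω + ((Y * B + B * Y)) Ω := by
    rw [hexp, add_apply]
  rw [happ, @norm_add_sq ℂ, key]
  simp
end

section
/- Let c > 0 and let f : ℝ → ℝ be a continuous function that is strictly positive on the open interval (−c, c), vanishes outside [−c, c], and satisfies ∫_ℝ f(x) dx = 1. Let μ be the Borel probability measure on ℝ with density f with respect to Lebesgue measure. Then there exists a Borel measurable function γ : ℝ → ℝ such that: (i) γ restricted to (0, c) is a strictly decreasing bijection of (0, c) onto itself; (ii) γ restricted to (−c, 0) is a strictly decreasing bijection of (−c, 0) onto itself; (iii) γ(γ(x)) = x for every x ∈ (−c, c) with x ≠ 0; and (iv) the pushforward of μ under γ equals μ (γ preserves the measure μ). -/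
open MeasureTheory Set

theorem key_piece (μ : Measure ℝ) [IsFiniteMeasure μ]
    (l r : ℝ) (hlr : l < r) (F γ : ℝ → ℝ)
    (hγm : Measurable γ)
    (hFmono : Monotone F)
    (hFs : StrictMonoOn F (Set.Icc l r))
    (hIoc : ∀ p q, p ≤ q → μ (Set.Ioc p q) = ENNReal.ofReal (F q - F p))
    (hnull : ∀ x, μ {x} = 0)
    (hγJ : ∀ x ∈ Set.Ioo l r, γ x ∈ Set.Ioo l r)
    (hFγJ : ∀ x ∈ Set.Ioo l r, F (γ x) = F l + F r - F x) :
    Measure.map γ (μ.restrict (Set.Ioo l r)) = μ.restrict (Set.Ioo l r) := by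
  -- squeeze lemma
  have Hsq : ∀ p q (A : Set ℝ), p ≤ q → Set.Ioo p q ⊆ A → A ⊆ Set.Icc p q →
      μ A = ENNReal.ofReal (F q - F p) := by
    intro p q A hpq h1 h2
    have hIooIoc : μ (Set.Ioo p q) = ENNReal.ofReal (F q - F p) := by
      have h3 : μ (Set.Ioc p q) ≤ μ (Set.Ioo p q) + μ {q} := by
        refine le_trans (measure_mono ?_) (measure_union_le _ _)
        intro x hx
        rcases eq_or_lt_of_le hx.2 with h | h
        · exact Or.inr (by simp [h])
        · exact Or.inl ⟨hx.1, h⟩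
      rw [hnull q, add_zero] at h3
      rw [← hIoc p q hpq]
      exact le_antisymm (measure_mono Set.Ioo_subset_Ioc_self) h3
    have hIccIoc : μ (Set.Icc p q) = ENNReal.ofReal (F q - F p) := by
      have h3 : μ (Set.Icc p q) ≤ μ {p} + μ (Set.Ioc p q) := by
        refine le_trans (measure_mono ?_) (measure_union_le _ _)
        intro x hx
        rcases eq_or_lt_of_le hx.1 with h | h
        · exact Or.inl (by simp [h.symm])
        · exact Or.inr ⟨h, hx.2⟩
      rw [hnull p, zero_add, hIoc p q hpq] at h3
      exact le_antisymm h3 ((hIoc p q hpq) ▸ measure_mono Set.Ioc_subset_Icc_self)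
    exact le_antisymm (hIccIoc ▸ measure_mono h2) (hIooIoc ▸ measure_mono h1)
  have hmemJ : Set.Ioo l r ⊆ Set.Icc l r := Set.Ioo_subset_Icc_self
  have hγanti : ∀ s t, s ∈ Set.Ioo l r → t ∈ Set.Ioo l r → s < t → γ t < γ s := by
    intro s t hs ht hst
    by_contra h
    push_neg at h
    have h1 : F (γ s) ≤ F (γ t) := hFmono h
    rw [hFγJ s hs, hFγJ t ht] at h1
    have h2 : F s < F t := hFs (hmemJ hs) (hmemJ ht) hst
    linarith
  classical
  set δ : ℝ → ℝ := fun y => if y ≤ l then r else if y < r then γ y else l with hδdef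
  have hδmem : ∀ y, δ y ∈ Set.Icc l r := by
    intro y
    by_cases h1 : y ≤ l
    · simp only [hδdef, if_pos h1]; exact ⟨hlr.le, le_refl r⟩
    · by_cases h2 : y < r
      · simp only [hδdef, if_neg h1, if_pos h2]
        exact hmemJ (hγJ y ⟨not_le.mp h1, h2⟩)
      · simp only [hδdef, if_neg h1, if_neg h2]; exact ⟨le_refl l, hlr.le⟩
  have hδchar : ∀ t, ∀ x ∈ Set.Ioo l r, (γ x ≤ t ↔ δ t ≤ x) := by
    intro t x hx
    by_cases h1 : t ≤ l
    · simp only [hδdef, if_pos h1]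
      exact iff_of_false (by have := (hγJ x hx).1; intro h; linarith)
        (by intro h; have := hx.2; linarith)
    · by_cases h2 : t < r
      · simp only [hδdef, if_neg h1, if_pos h2]
        have ht : t ∈ Set.Ioo l r := ⟨not_le.mp h1, h2⟩
        have e1 : γ x ≤ t ↔ F (γ x) ≤ F t := (hFs.le_iff_le (hmemJ (hγJ x hx)) (hmemJ ht)).symm
        have e2 : γ t ≤ x ↔ F (γ t) ≤ F x := (hFs.le_iff_le (hmemJ (hγJ t ht)) (hmemJ hx)).symm
        rw [e1, e2, hFγJ x hx, hFγJ t ht]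
        constructor <;> intro h <;> linarith
      · simp only [hδdef, if_neg h1, if_neg h2]
        exact iff_of_true (by have := (hγJ x hx).2; linarith) hx.1.le
  haveI : IsFiniteMeasure (Measure.map γ (μ.restrict (Set.Ioo l r))) :=
    Measure.isFiniteMeasure_map _ _
  refine Measure.ext_of_Ioc _ _ (fun s t hst => ?_)
  rw [Measure.map_apply hγm measurableSet_Ioc,
    Measure.restrict_apply (hγm measurableSet_Ioc), Measure.restrict_apply measurableSet_Ioc]
  have hsetL : γ ⁻¹' (Set.Ioc s t) ∩ Set.Ioo l r = Set.Ioo l r ∩ Set.Ico (δ t) (δ s) := by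
    ext x
    simp only [Set.mem_inter_iff, Set.mem_preimage, Set.mem_Ioc, Set.mem_Ico]
    constructor
    · rintro ⟨⟨hs1, ht1⟩, hxJ⟩
      refine ⟨hxJ, (hδchar t x hxJ).mp ht1, ?_⟩
      by_contra h
      push_neg at h
      exact absurd ((hδchar s x hxJ).mpr h) (not_le.mpr hs1)
    · rintro ⟨hxJ, ht1, hs1⟩
      refine ⟨⟨?_, (hδchar t x hxJ).mpr ht1⟩, hxJ⟩
      by_contra h
      push_neg at h
      exact absurd ((hδchar s x hxJ).mp h) (not_le.mpr hs1)
  rw [hsetL]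
  have hL : μ (Set.Ioo l r ∩ Set.Ico (δ t) (δ s))
      = ENNReal.ofReal (F (max (δ t) (δ s)) - F (δ t)) := by
    refine Hsq (δ t) (max (δ t) (δ s)) _ (le_max_left _ _) ?_ ?_
    · intro x hx
      rcases le_or_gt (δ s) (δ t) with h | h
      · rw [max_eq_left h] at hx; exact absurd hx.2 (not_lt.mpr hx.1.le)
      · rw [max_eq_right h.le] at hx
        have h1 := (hδmem t).1
        have h2 := (hδmem s).2
        exact ⟨⟨lt_of_le_of_lt h1 hx.1, lt_of_lt_of_le hx.2 h2⟩, hx.1.le, hx.2⟩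
    · rintro x ⟨hxJ, h1, h2⟩
      exact ⟨h1, le_of_lt (lt_of_lt_of_le h2 (le_max_right _ _))⟩
  have hR : μ (Set.Ioc s t ∩ Set.Ioo l r)
      = ENNReal.ofReal (F (max (max l (min s r)) (min t r)) - F (max l (min s r))) := by
    refine Hsq (max l (min s r)) (max (max l (min s r)) (min t r)) _ (le_max_left _ _) ?_ ?_
    · intro x hx
      rcases le_or_gt (min t r) (max l (min s r)) with h | h
      · rw [max_eq_left h] at hx; exact absurd hx.2 (not_lt.mpr hx.1.le)
      · rw [max_eq_right h.le] at hx
        have hxl : l < x := lt_of_le_of_lt (le_max_left _ _) hx.1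
        have hxr : x < r := lt_of_lt_of_le hx.2 (min_le_right _ _)
        have hxs : s < x := by
          rcases le_or_gt s r with h3 | h3
          · have h4 : s ≤ max l (min s r) := by
              rw [min_eq_left h3]; exact le_max_right _ _
            exact lt_of_le_of_lt h4 hx.1
          · have : x < s := lt_trans hxr h3
            have h4 : r ≤ max l (min s r) := by
              rw [min_eq_right h3.le]; exact le_max_right _ _
            linarith [lt_of_le_of_lt h4 hx.1]
        exact ⟨⟨hxs, le_of_lt (lt_of_lt_of_le hx.2 (min_le_left _ _))⟩, hxl, hxr⟩
    · rintro x ⟨⟨hs1, ht1⟩, hxl, hxr⟩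
      constructor
      · exact max_le hxl.le (le_trans (min_le_left _ _) hs1.le)
      · exact le_trans (le_min ht1 hxr.le) (le_max_right _ _)
  rw [hL, hR]
  congr 1
  rcases le_or_gt t l with htl | htl
  · have hsl : s < l := lt_of_lt_of_le hst htl
    have hδt : δ t = r := by simp only [hδdef, if_pos htl]
    have hδs : δ s = r := by simp only [hδdef, if_pos hsl.le]
    rw [hδt, hδs, max_self, min_eq_left (le_trans hsl.le hlr.le), max_eq_left hsl.le,
      min_eq_left (le_trans htl hlr.le), max_eq_left htl]
    ring
  · have hδt1 : ¬ t ≤ l := not_le.mpr htl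
    rcases le_or_gt s l with hsl | hsl
    · have hδs : δ s = r := by simp only [hδdef, if_pos hsl]
      have hp : max l (min s r) = l := by
        rw [min_eq_left (le_trans hsl hlr.le), max_eq_left hsl]
      rcases lt_or_ge t r with htr | htr
      · have ht : t ∈ Set.Ioo l r := ⟨htl, htr⟩
        have hδt : δ t = γ t := by simp only [hδdef, if_neg hδt1, if_pos htr]
        rw [hδs, hδt, hp, max_eq_right (hγJ t ht).2.le, min_eq_left htr.le,
          max_eq_right htl.le, hFγJ t ht]
        ring
      · have hδt : δ t = l := by simp only [hδdef, if_neg hδt1, if_neg (not_lt.mpr htr)]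
        rw [hδs, hδt, hp, max_eq_right hlr.le, min_eq_right htr, max_eq_right hlr.le]
    · rcases lt_or_ge s r with hsr | hsr
      · have hs : s ∈ Set.Ioo l r := ⟨hsl, hsr⟩
        have hδs : δ s = γ s := by
          simp only [hδdef, if_neg (not_le.mpr hsl), if_pos hsr]
        have hp : max l (min s r) = s := by
          rw [min_eq_left hsr.le, max_eq_right hsl.le]
        rcases lt_or_ge t r with htr | htr
        · have ht : t ∈ Set.Ioo l r := ⟨htl, htr⟩
          have hδt : δ t = γ t := by simp only [hδdef, if_neg hδt1, if_pos htr]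
          rw [hδs, hδt, max_eq_right (hγanti s t hs ht hst).le, hp,
            min_eq_left htr.le, max_eq_right hst.le, hFγJ t ht, hFγJ s hs]
          ring
        · have hδt : δ t = l := by simp only [hδdef, if_neg hδt1, if_neg (not_lt.mpr htr)]
          rw [hδs, hδt, max_eq_right (hγJ s hs).1.le, hp, min_eq_right htr,
            max_eq_right hsr.le, hFγJ s hs]
          ring
      · have hδs : δ s = l := by
          simp only [hδdef, if_neg (not_le.mpr hsl), if_neg (not_lt.mpr hsr)]
        have hδt : δ t = l := by
          simp only [hδdef, if_neg hδt1, if_neg (not_lt.mpr (le_trans hsr hst.le))]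
        have hp : max l (min s r) = r := by
          rw [min_eq_right hsr, max_eq_right hlr.le]
        rw [hδs, hδt, max_self, hp, min_eq_right (le_trans hsr hst.le), max_self]
        ring

theorem inv_aux (l r : ℝ) (hlr : l < r) (F : ℝ → ℝ) (hFc : Continuous F)
    (hFmono : Monotone F) (hFs : StrictMonoOn F (Set.Icc l r)) :
    ∃ g : ℝ → ℝ, Antitone g ∧
      (∀ x ∈ Set.Ioo l r, g x ∈ Set.Ioo l r ∧ F (g x) = F l + F r - F x) := by
  classical
  set S : ℝ → Set ℝ := fun x => {y ∈ Set.Icc l r | F l + F r - F (max l (min x r)) ≤ F y}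
    with hS
  have hne : ∀ x, (S x).Nonempty := by
    intro x
    refine ⟨r, ⟨hlr.le, le_refl r⟩, ?_⟩
    have : F l ≤ F (max l (min x r)) := hFmono (le_max_left _ _)
    linarith
  have hbdd : ∀ x, BddBelow (S x) := fun x => ⟨l, fun y hy => hy.1.1⟩
  refine ⟨fun x => sInf (S x), ?_, ?_⟩
  · intro x y hxy
    refine csInf_le_csInf (hbdd y) (hne x) ?_
    intro z hz
    refine ⟨hz.1, le_trans ?_ hz.2⟩
    have : F (max l (min x r)) ≤ F (max l (min y r)) :=
      hFmono (max_le_max (le_refl l) (min_le_min hxy (le_refl r)))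
    linarith
  · intro x hx
    have hclamp : max l (min x r) = x := by
      rw [min_eq_left hx.2.le, max_eq_right hx.1.le]
    have hclosed : IsClosed (S x) :=
      IsClosed.inter isClosed_Icc (isClosed_le continuous_const hFc)
    obtain ⟨hyIcc, hyge⟩ := hclosed.csInf_mem (hne x) (hbdd x)
    rw [hclamp] at hyge
    have hd1 : F l ≤ F l + F r - F x := by
      have := hFmono hx.2.le; linarith
    have hd2 : F l + F r - F x ≤ F r := by
      have := hFmono hx.1.le; linarith
    obtain ⟨y0, hy0mem, hy0⟩ := intermediate_value_Icc hlr.le hFc.continuousOn ⟨hd1, hd2⟩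
    have hle : sInf (S x) ≤ y0 := csInf_le (hbdd x) ⟨hy0mem, by rw [hclamp, hy0]⟩
    have hFeq : F (sInf (S x)) = F l + F r - F x :=
      le_antisymm (by have := hFmono hle; rw [hy0] at this; exact this) hyge
    refine ⟨⟨?_, ?_⟩, hFeq⟩
    · rcases eq_or_lt_of_le hyIcc.1 with h | h
      · exfalso
        have h2 : F x < F r := hFs ⟨hx.1.le, hx.2.le⟩ ⟨hlr.le, le_refl r⟩ hx.2
        rw [← h] at hFeq
        linarith
      · exact h
    · rcases eq_or_lt_of_le hyIcc.2 with h | h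
      · exfalso
        have h2 : F l < F x := hFs ⟨le_refl l, hlr.le⟩ ⟨hx.1.le, hx.2.le⟩ hx.1
        rw [h] at hFeq
        linarith
      · exact h

theorem exists_measure_preserving_involution
    (c : ℝ) (hc : 0 < c) (f : ℝ → ℝ)
    (hf : Continuous f)
    (hpos : ∀ x ∈ Set.Ioo (-c) c, 0 < f x)
    (hzero : ∀ x, x ∉ Set.Icc (-c) c → f x = 0)
    (hint : ∫ x, f x = 1) :
    ∃ γ : ℝ → ℝ, Measurable γ ∧
      Set.BijOn γ (Set.Ioo 0 c) (Set.Ioo 0 c) ∧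
      StrictAntiOn γ (Set.Ioo 0 c) ∧
      Set.BijOn γ (Set.Ioo (-c) 0) (Set.Ioo (-c) 0) ∧
      StrictAntiOn γ (Set.Ioo (-c) 0) ∧
      (∀ x ∈ Set.Ioo (-c) c, x ≠ 0 → γ (γ x) = x) ∧
      Measure.map γ (volume.withDensity fun x => ENNReal.ofReal (f x))
        = volume.withDensity fun x => ENNReal.ofReal (f x) := by
  classical
  have hcc : -c < c := by linarith
  -- values at endpoints
  have hfc : f c = 0 := by
    have h1 : Set.EqOn f 0 (Set.Ioi c) := fun x hx =>
      hzero x (fun hm => absurd hm.2 (not_le.mpr hx))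
    have h2 : Set.EqOn f 0 (closure (Set.Ioi c)) := h1.closure hf continuous_const
    rw [closure_Ioi] at h2
    exact h2 (le_refl c)
  have hfmc : f (-c) = 0 := by
    have h1 : Set.EqOn f 0 (Set.Iio (-c)) := fun x hx =>
      hzero x (fun hm => absurd hm.1 (not_le.mpr hx))
    have h2 : Set.EqOn f 0 (closure (Set.Iio (-c))) := h1.closure hf continuous_const
    rw [closure_Iio] at h2
    exact h2 (le_refl (-c))
  have hf0 : ∀ x, 0 ≤ f x := by
    intro x
    by_cases hx : x ∈ Set.Icc (-c) c
    · rcases eq_or_lt_of_le hx.1 with h | h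
      · rw [← h, hfmc]
      · rcases eq_or_lt_of_le hx.2 with h2 | h2
        · rw [h2, hfc]
        · exact (hpos x ⟨h, h2⟩).le
    · rw [hzero x hx]
  have hsupp : HasCompactSupport f :=
    HasCompactSupport.intro isCompact_Icc (fun x hx => hzero x hx)
  have hInt : Integrable f := hf.integrable_of_hasCompactSupport hsupp
  have hFint : ∀ a b : ℝ, IntervalIntegrable f volume a b := fun a b => hf.intervalIntegrable a b
  set F : ℝ → ℝ := fun x => ∫ t in (0:ℝ)..x, f t with hFdef
  have hFsub : ∀ x y : ℝ, F y - F x = ∫ t in x..y, f t := fun x y =>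
    intervalIntegral.integral_interval_sub_left (hFint 0 y) (hFint 0 x)
  have hFcont : Continuous F := intervalIntegral.continuous_primitive hFint 0
  have hFmono : Monotone F := by
    intro x y hxy
    have h1 : 0 ≤ ∫ t in x..y, f t :=
      intervalIntegral.integral_nonneg hxy (fun u _ => hf0 u)
    rw [← hFsub x y] at h1
    linarith
  have hFs : StrictMonoOn F (Set.Icc (-c) c) := by
    intro x hx y hy hxy
    have h1 : 0 < ∫ t in x..y, f t := by
      refine intervalIntegral.intervalIntegral_pos_of_pos_on (hFint x y) ?_ hxy
      intro u hu
      exact hpos u ⟨lt_of_le_of_lt hx.1 hu.1, lt_of_lt_of_le hu.2 hy.2⟩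
    have h2 := hFsub x y
    have : F x < F y := by linarith
    exact this
  -- the measure
  set μ : Measure ℝ := volume.withDensity fun x => ENNReal.ofReal (f x) with hμdef
  have hnull : ∀ x : ℝ, μ {x} = 0 := fun x =>
    withDensity_absolutelyContinuous volume _ (Real.volume_singleton)
  have hμIoc : ∀ p q : ℝ, p ≤ q → μ (Set.Ioc p q) = ENNReal.ofReal (F q - F p) := by
    intro p q hpq
    rw [hμdef, withDensity_apply _ measurableSet_Ioc,
      ← ofReal_integral_eq_lintegral_ofReal hInt.integrableOn (ae_of_all _ hf0)]
    congr 1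
    rw [hFsub p q, intervalIntegral.integral_of_le hpq]
  haveI : IsFiniteMeasure μ := by
    rw [hμdef]
    refine isFiniteMeasure_withDensity ?_
    rw [← ofReal_integral_eq_lintegral_ofReal hInt (ae_of_all _ hf0), hint]
    simp
  -- inverse functions
  obtain ⟨gp, hgpanti, hgp⟩ := inv_aux 0 c hc F hFcont hFmono
    (hFs.mono (Set.Icc_subset_Icc (by linarith) (le_refl c)))
  obtain ⟨gm, hgmanti, hgm⟩ := inv_aux (-c) 0 (by linarith) F hFcont hFmono
    (hFs.mono (Set.Icc_subset_Icc (le_refl (-c)) hc.le))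
  set γ : ℝ → ℝ := (Set.Ioo (0:ℝ) c).piecewise gp ((Set.Ioo (-c) (0:ℝ)).piecewise gm id)
    with hγdef
  have hγmeas : Measurable γ :=
    Measurable.piecewise measurableSet_Ioo hgpanti.measurable
      (Measurable.piecewise measurableSet_Ioo hgmanti.measurable measurable_id)
  have hγp : ∀ x ∈ Set.Ioo (0:ℝ) c, γ x = gp x := fun x hx =>
    Set.piecewise_eq_of_mem _ _ _ hx
  have hγm : ∀ x ∈ Set.Ioo (-c) (0:ℝ), γ x = gm x := by
    intro x hx
    have hx' : x ∉ Set.Ioo (0:ℝ) c := fun h => absurd hx.2 (not_lt.mpr h.1.le)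
    rw [hγdef]
    rw [Set.piecewise_eq_of_notMem _ _ _ hx', Set.piecewise_eq_of_mem _ _ _ hx]
  have hγpJ : ∀ x ∈ Set.Ioo (0:ℝ) c, γ x ∈ Set.Ioo (0:ℝ) c := by
    intro x hx; rw [hγp x hx]; exact (hgp x hx).1
  have hγmJ : ∀ x ∈ Set.Ioo (-c) (0:ℝ), γ x ∈ Set.Ioo (-c) (0:ℝ) := by
    intro x hx; rw [hγm x hx]; exact (hgm x hx).1
  have hFγp : ∀ x ∈ Set.Ioo (0:ℝ) c, F (γ x) = F 0 + F c - F x := by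
    intro x hx; rw [hγp x hx]; exact (hgp x hx).2
  have hFγm : ∀ x ∈ Set.Ioo (-c) (0:ℝ), F (γ x) = F (-c) + F 0 - F x := by
    intro x hx; rw [hγm x hx]; exact (hgm x hx).2
  have hinjF : Set.InjOn F (Set.Icc (-c) c) := hFs.injOn
  have hsubp : Set.Ioo (0:ℝ) c ⊆ Set.Icc (-c) c := fun x hx =>
    ⟨by linarith [hx.1], hx.2.le⟩
  have hsubm : Set.Ioo (-c) (0:ℝ) ⊆ Set.Icc (-c) c := fun x hx =>
    ⟨hx.1.le, by linarith [hx.2]⟩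
  -- strict antitonicity
  have hantip : StrictAntiOn γ (Set.Ioo (0:ℝ) c) := by
    intro x hx y hy hxy
    have h1 : F (γ y) < F (γ x) := by
      rw [hFγp x hx, hFγp y hy]
      have : F x < F y := hFs (hsubp hx) (hsubp hy) hxy
      linarith
    by_contra h
    push_neg at h
    exact absurd (hFmono h) (not_le.mpr h1)
  have hantim : StrictAntiOn γ (Set.Ioo (-c) (0:ℝ)) := by
    intro x hx y hy hxy
    have h1 : F (γ y) < F (γ x) := by
      rw [hFγm x hx, hFγm y hy]
      have : F x < F y := hFs (hsubm hx) (hsubm hy) hxy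
      linarith
    by_contra h
    push_neg at h
    exact absurd (hFmono h) (not_le.mpr h1)
  -- involution
  have hinvp : ∀ x ∈ Set.Ioo (0:ℝ) c, γ (γ x) = x := by
    intro x hx
    have h1 := hγpJ x hx
    have h2 : F (γ (γ x)) = F x := by
      rw [hFγp _ h1, hFγp x hx]; ring
    exact hinjF (hsubp (hγpJ _ h1)) (hsubp hx) h2
  have hinvm : ∀ x ∈ Set.Ioo (-c) (0:ℝ), γ (γ x) = x := by
    intro x hx
    have h1 := hγmJ x hx
    have h2 : F (γ (γ x)) = F x := by
      rw [hFγm _ h1, hFγm x hx]; ring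
    exact hinjF (hsubm (hγmJ _ h1)) (hsubm hx) h2
  -- bijectivity
  have hbijp : Set.BijOn γ (Set.Ioo 0 c) (Set.Ioo 0 c) :=
    ⟨hγpJ, hantip.injOn, fun y hy => ⟨γ y, hγpJ y hy, hinvp y hy⟩⟩
  have hbijm : Set.BijOn γ (Set.Ioo (-c) 0) (Set.Ioo (-c) 0) :=
    ⟨hγmJ, hantim.injOn, fun y hy => ⟨γ y, hγmJ y hy, hinvm y hy⟩⟩
  refine ⟨γ, hγmeas, hbijp, hantip, hbijm, hantim, ?_, ?_⟩
  · intro x hx hx0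
    rcases lt_or_gt_of_ne hx0 with h | h
    · exact hinvm x ⟨hx.1, h⟩
    · exact hinvp x ⟨h, hx.2⟩
  -- measure preservation
  · have key1 : Measure.map γ (μ.restrict (Set.Ioo 0 c)) = μ.restrict (Set.Ioo 0 c) :=
      key_piece μ 0 c hc F γ hγmeas hFmono
        (hFs.mono (Set.Icc_subset_Icc (by linarith) (le_refl c)))
        hμIoc hnull hγpJ hFγp
    have key2 : Measure.map γ (μ.restrict (Set.Ioo (-c) 0)) = μ.restrict (Set.Ioo (-c) 0) :=
      key_piece μ (-c) 0 (by linarith) F γ hγmeas hFmono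
        (hFs.mono (Set.Icc_subset_Icc (le_refl (-c)) hc.le))
        hμIoc hnull hγmJ hFγm
    set T : Set ℝ := Set.Ioo 0 c ∪ Set.Ioo (-c) 0 with hT
    have hTmeas : MeasurableSet T := measurableSet_Ioo.union measurableSet_Ioo
    have hdisj : Disjoint (Set.Ioo (0:ℝ) c) (Set.Ioo (-c) (0:ℝ)) := by
      rw [Set.disjoint_left]
      intro x hx1 hx2
      exact absurd hx2.2 (not_lt.mpr hx1.1.le)
    have hTc : μ Tᶜ = 0 := by
      have hsub : Tᶜ ⊆ {x | f x = 0} ∪ {0} := by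
        intro x hx
        by_cases h0 : x = 0
        · exact Or.inr (by simp [h0])
        · left
          simp only [Set.mem_setOf_eq]
          by_cases hic : x ∈ Set.Icc (-c) c
          · rcases eq_or_lt_of_le hic.1 with h | h
            · rw [← h, hfmc]
            · rcases eq_or_lt_of_le hic.2 with h2 | h2
              · rw [h2, hfc]
              · exfalso
                apply hx
                rcases lt_or_gt_of_ne h0 with h3 | h3
                · exact Or.inr ⟨h, h3⟩
                · exact Or.inl ⟨h3, h2⟩
          · exact hzero x hic
      have hZ : MeasurableSet {x : ℝ | f x = 0} := hf.measurable (measurableSet_singleton 0)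
      have hμZ : μ {x | f x = 0} = 0 := by
        rw [hμdef, withDensity_apply _ hZ]
        rw [setLIntegral_congr_fun hZ (fun x hx => by
          simp only [Set.mem_setOf_eq] at hx
          rw [hx, ENNReal.ofReal_zero])]
        simp
      refine le_antisymm ?_ zero_le
      calc μ Tᶜ ≤ μ ({x | f x = 0} ∪ {0}) := measure_mono hsub
        _ ≤ μ {x | f x = 0} + μ {0} := measure_union_le _ _
        _ = 0 := by rw [hμZ, hnull 0]; simp
    have hrestr : μ.restrict Tᶜ = 0 := Measure.restrict_eq_zero.mpr hTc
    have hdecomp : μ = μ.restrict (Set.Ioo 0 c) + μ.restrict (Set.Ioo (-c) 0)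
        + μ.restrict Tᶜ := by
      rw [← Measure.restrict_union hdisj measurableSet_Ioo, ← hT]
      exact (Measure.restrict_add_restrict_compl hTmeas).symm
    calc Measure.map γ μ
        = Measure.map γ (μ.restrict (Set.Ioo 0 c)) + Measure.map γ (μ.restrict (Set.Ioo (-c) 0))
          + Measure.map γ (μ.restrict Tᶜ) := by
          rw [← Measure.map_add _ _ hγmeas, ← Measure.map_add _ _ hγmeas, ← hdecomp]
      _ = μ.restrict (Set.Ioo 0 c) + μ.restrict (Set.Ioo (-c) 0) + 0 := by
          rw [key1, key2, hrestr, Measure.map_zero]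
      _ = μ := by
          rw [hrestr, add_zero] at hdecomp
          rw [add_zero]
          exact hdecomp.symm
end

section
/- Let q ∈ (0,1) and let H = ℓ²(ℕ, ℂ) with standard orthonormal basis (e_n)_{n ∈ ℕ}. Then there exists a bounded operator a : H →L[ℂ] H such that a e₀ = 0, a e_n = √([n]_q) e_{n−1} for all n ≥ 1, its adjoint satisfies a* e_n = √([n+1]_q) e_{n+1} for all n ∈ ℕ, and a ∘ a* − q • (a* ∘ a) = 1 (the identity operator). Moreover aΩ = 0 for Ω = e₀, and ‖a‖ = (1 − q)^{−1/2}. -/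
open ContinuousLinearMap
open scoped ENNReal
section
variable (q : ℝ)

noncomputable def cseq (n : ℕ) : ℝ := Real.sqrt (qInt q (n+1))

lemma qInt_nonneg (hq0 : 0 ≤ q) (n : ℕ) : 0 ≤ qInt q n :=
  Finset.sum_nonneg fun j _ => pow_nonneg hq0 j

lemma qInt_le (hq0 : 0 ≤ q) (hq1 : q < 1) (n : ℕ) : qInt q n ≤ (1 - q)⁻¹ := by
  have h := hasSum_geometric_of_lt_one hq0 hq1
  exact (Summable.sum_le_tsum (Finset.range n) (fun j _ => pow_nonneg hq0 j) h.summable).trans_eq h.tsum_eq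

lemma cseq_le (hq0 : 0 ≤ q) (hq1 : q < 1) (n : ℕ) :
    cseq q n ≤ Real.sqrt (1 - q)⁻¹ :=
  Real.sqrt_le_sqrt (qInt_le q hq0 hq1 _)

lemma cseq_nonneg (n : ℕ) : 0 ≤ cseq q n := Real.sqrt_nonneg _

lemma cseq_sq (hq0 : 0 ≤ q) (n : ℕ) : cseq q n * cseq q n = qInt q (n+1) :=
  Real.mul_self_sqrt (qInt_nonneg q hq0 _)

end

section
variable (q : ℝ)

/-- raw annihilation map on sequences -/
noncomputable def Araw (f : ℕ → ℂ) : ℕ → ℂ := fun n => (cseq q n : ℂ) * f (n+1)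

/-- raw creation map on sequences -/
noncomputable def Braw (f : ℕ → ℂ) : ℕ → ℂ := fun n =>
  Nat.casesOn n 0 (fun m => (cseq q m : ℂ) * f m)

variable {q}

lemma sq_bound (d z : ℂ) (C : ℝ) (hd : ‖d‖ ≤ C) :
    ‖d * z‖ ^ (2:ℝ) ≤ C^2 * ‖z‖ ^ (2:ℝ) := by
  rw [Real.rpow_two, Real.rpow_two, norm_mul, mul_pow]
  exact mul_le_mul_of_nonneg_right (pow_le_pow_left₀ (norm_nonneg d) hd 2) (by positivity)

lemma memA (hq0 : 0 ≤ q) (hq1 : q < 1) (f : lp (fun _ : ℕ => ℂ) 2) : Memℓp (Araw q f) 2 := by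
  apply memℓp_gen
  have hs : Summable fun n => ‖(f : ℕ → ℂ) n‖ ^ (2:ℝ≥0∞).toReal :=
    (lp.memℓp f).summable (by norm_num)
  have hs1 : Summable fun n => ‖(f : ℕ → ℂ) (n+1)‖ ^ (2:ℝ≥0∞).toReal :=
    (summable_nat_add_iff 1).2 hs
  refine Summable.of_nonneg_of_le (fun n => Real.rpow_nonneg (norm_nonneg _) _)
    (fun n => ?_) (hs1.mul_left ((Real.sqrt (1-q)⁻¹)^2))
  have : ‖((cseq q n : ℝ) : ℂ)‖ ≤ Real.sqrt (1-q)⁻¹ := by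
    rw [Complex.norm_real, Real.norm_eq_abs, abs_of_nonneg (cseq_nonneg q n)]
    exact cseq_le q hq0 hq1 n
  rw [ENNReal.toReal_ofNat]
  exact sq_bound _ _ _ this

lemma memB (hq0 : 0 ≤ q) (hq1 : q < 1) (f : lp (fun _ : ℕ => ℂ) 2) : Memℓp (Braw q f) 2 := by
  apply memℓp_gen
  apply (summable_nat_add_iff 1).1
  have hs : Summable fun n => ‖(f : ℕ → ℂ) n‖ ^ (2:ℝ≥0∞).toReal :=
    (lp.memℓp f).summable (by norm_num)
  refine Summable.of_nonneg_of_le (fun n => Real.rpow_nonneg (norm_nonneg _) _)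
    (fun n => ?_) (hs.mul_left ((Real.sqrt (1-q)⁻¹)^2))
  have : ‖((cseq q n : ℝ) : ℂ)‖ ≤ Real.sqrt (1-q)⁻¹ := by
    rw [Complex.norm_real, Real.norm_eq_abs, abs_of_nonneg (cseq_nonneg q n)]
    exact cseq_le q hq0 hq1 n
  rw [ENNReal.toReal_ofNat]
  exact sq_bound _ _ _ this
end

section
variable {q : ℝ}

/-- annihilation operator as a linear map -/
noncomputable def aLM (hq0 : 0 ≤ q) (hq1 : q < 1) :
    lp (fun _ : ℕ => ℂ) 2 →ₗ[ℂ] lp (fun _ : ℕ => ℂ) 2 where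
  toFun f := ⟨Araw q f, memA hq0 hq1 f⟩
  map_add' f g := by
    apply Subtype.ext
    funext n
    simp [Araw, mul_add]
    rfl
  map_smul' c f := by
    apply Subtype.ext
    funext n
    simp [Araw, Pi.smul_apply, smul_eq_mul]
    ring

noncomputable def bLM (hq0 : 0 ≤ q) (hq1 : q < 1) :
    lp (fun _ : ℕ => ℂ) 2 →ₗ[ℂ] lp (fun _ : ℕ => ℂ) 2 where
  toFun f := ⟨Braw q f, memB hq0 hq1 f⟩
  map_add' f g := by
    apply Subtype.ext
    funext n
    cases n with
    | zero =>
        show (0:ℂ) = Braw q (↑f) 0 + Braw q (↑g) 0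
        simp [Braw]
    | succ m => simp [Braw, mul_add]; rfl
  map_smul' c f := by
    apply Subtype.ext
    funext n
    cases n with
    | zero => simp [Braw]
    | succ m => simp [Braw, Pi.smul_apply, smul_eq_mul]; ring

lemma aLM_bound (hq0 : 0 ≤ q) (hq1 : q < 1) (f : lp (fun _ : ℕ => ℂ) 2) :
    ‖aLM hq0 hq1 f‖ ≤ Real.sqrt (1-q)⁻¹ * ‖f‖ := by
  have hp : (0:ℝ) < (2:ℝ≥0∞).toReal := by norm_num
  apply lp.norm_le_of_tsum_le hp (by positivity)
  have hsum : Summable fun n => ‖(f : ℕ → ℂ) n‖ ^ (2:ℝ≥0∞).toReal :=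
    (lp.memℓp f).summable hp
  have hsum1 : Summable fun n => ‖(f : ℕ → ℂ) (n+1)‖ ^ (2:ℝ≥0∞).toReal :=
    (summable_nat_add_iff 1).2 hsum
  have hA : Summable fun n => ‖Araw q (f : ℕ → ℂ) n‖ ^ (2:ℝ≥0∞).toReal :=
    (memA hq0 hq1 f).summable hp
  set C := Real.sqrt (1-q)⁻¹ with hC
  have hle : ∀ n, ‖Araw q (f : ℕ → ℂ) n‖ ^ (2:ℝ≥0∞).toReal
      ≤ C^2 * ‖(f : ℕ → ℂ) (n+1)‖ ^ (2:ℝ≥0∞).toReal := by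
    intro n
    rw [ENNReal.toReal_ofNat]
    refine sq_bound _ _ _ ?_
    rw [Complex.norm_real, Real.norm_eq_abs, abs_of_nonneg (cseq_nonneg q n)]
    exact cseq_le q hq0 hq1 n
  calc ∑' n, ‖Araw q (f : ℕ → ℂ) n‖ ^ (2:ℝ≥0∞).toReal
      ≤ ∑' n, C^2 * ‖(f : ℕ → ℂ) (n+1)‖ ^ (2:ℝ≥0∞).toReal :=
        Summable.tsum_le_tsum hle hA (hsum1.mul_left _)
    _ = C^2 * ∑' n, ‖(f : ℕ → ℂ) (n+1)‖ ^ (2:ℝ≥0∞).toReal := tsum_mul_left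
    _ ≤ C^2 * ∑' n, ‖(f : ℕ → ℂ) n‖ ^ (2:ℝ≥0∞).toReal := by
        apply mul_le_mul_of_nonneg_left _ (by positivity)
        have h0 := Summable.tsum_eq_zero_add hsum
        have h1 : (0:ℝ) ≤ ‖(f : ℕ → ℂ) 0‖ ^ (2:ℝ≥0∞).toReal := by positivity
        linarith
    _ = C^2 * ‖f‖ ^ (2:ℝ≥0∞).toReal := by rw [← lp.norm_rpow_eq_tsum hp]
    _ = (C * ‖f‖) ^ (2:ℝ≥0∞).toReal := by
        rw [ENNReal.toReal_ofNat, Real.rpow_two, Real.rpow_two, mul_pow]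

end

section
variable {q : ℝ}
lemma bLM_bound (hq0 : 0 ≤ q) (hq1 : q < 1) (f : lp (fun _ : ℕ => ℂ) 2) :
    ‖bLM hq0 hq1 f‖ ≤ Real.sqrt (1-q)⁻¹ * ‖f‖ := by
  have hp : (0:ℝ) < (2:ℝ≥0∞).toReal := by norm_num
  apply lp.norm_le_of_tsum_le hp (by positivity)
  have hsum : Summable fun n => ‖(f : ℕ → ℂ) n‖ ^ (2:ℝ≥0∞).toReal :=
    (lp.memℓp f).summable hp
  have hB : Summable fun n => ‖Braw q (f : ℕ → ℂ) n‖ ^ (2:ℝ≥0∞).toReal :=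
    (memB hq0 hq1 f).summable hp
  set C := Real.sqrt (1-q)⁻¹ with hC
  have hle : ∀ n, ‖Braw q (f : ℕ → ℂ) (n+1)‖ ^ (2:ℝ≥0∞).toReal
      ≤ C^2 * ‖(f : ℕ → ℂ) n‖ ^ (2:ℝ≥0∞).toReal := by
    intro n
    rw [ENNReal.toReal_ofNat]
    refine sq_bound _ _ _ ?_
    rw [Complex.norm_real, Real.norm_eq_abs, abs_of_nonneg (cseq_nonneg q n)]
    exact cseq_le q hq0 hq1 n
  have h0 : ‖Braw q (f : ℕ → ℂ) 0‖ ^ (2:ℝ≥0∞).toReal = 0 := by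
    have : Braw q (f : ℕ → ℂ) 0 = 0 := rfl
    rw [this, norm_zero, Real.zero_rpow (by norm_num)]
  calc ∑' n, ‖Braw q (f : ℕ → ℂ) n‖ ^ (2:ℝ≥0∞).toReal
      = ‖Braw q (f : ℕ → ℂ) 0‖ ^ (2:ℝ≥0∞).toReal
        + ∑' n, ‖Braw q (f : ℕ → ℂ) (n+1)‖ ^ (2:ℝ≥0∞).toReal := Summable.tsum_eq_zero_add hB
    _ = ∑' n, ‖Braw q (f : ℕ → ℂ) (n+1)‖ ^ (2:ℝ≥0∞).toReal := by rw [h0, zero_add]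
    _ ≤ ∑' n, C^2 * ‖(f : ℕ → ℂ) n‖ ^ (2:ℝ≥0∞).toReal :=
        Summable.tsum_le_tsum hle ((summable_nat_add_iff 1).2 hB) (hsum.mul_left _)
    _ = C^2 * ∑' n, ‖(f : ℕ → ℂ) n‖ ^ (2:ℝ≥0∞).toReal := tsum_mul_left
    _ = C^2 * ‖f‖ ^ (2:ℝ≥0∞).toReal := by rw [← lp.norm_rpow_eq_tsum hp]
    _ = (C * ‖f‖) ^ (2:ℝ≥0∞).toReal := by
        rw [ENNReal.toReal_ofNat, Real.rpow_two, Real.rpow_two, mul_pow]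

/-- annihilation operator -/
noncomputable def aOp (hq0 : 0 ≤ q) (hq1 : q < 1) :
    lp (fun _ : ℕ => ℂ) 2 →L[ℂ] lp (fun _ : ℕ => ℂ) 2 :=
  LinearMap.mkContinuous (aLM hq0 hq1) (Real.sqrt (1-q)⁻¹) (aLM_bound hq0 hq1)

/-- creation operator -/
noncomputable def bOp (hq0 : 0 ≤ q) (hq1 : q < 1) :
    lp (fun _ : ℕ => ℂ) 2 →L[ℂ] lp (fun _ : ℕ => ℂ) 2 :=
  LinearMap.mkContinuous (bLM hq0 hq1) (Real.sqrt (1-q)⁻¹) (bLM_bound hq0 hq1)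

@[simp] lemma aOp_apply (hq0 : 0 ≤ q) (hq1 : q < 1) (f : lp (fun _ : ℕ => ℂ) 2) (n : ℕ) :
    (aOp hq0 hq1 f : ℕ → ℂ) n = (cseq q n : ℂ) * (f : ℕ → ℂ) (n+1) := rfl

@[simp] lemma bOp_apply_zero (hq0 : 0 ≤ q) (hq1 : q < 1) (f : lp (fun _ : ℕ => ℂ) 2) :
    (bOp hq0 hq1 f : ℕ → ℂ) 0 = 0 := rfl

@[simp] lemma bOp_apply_succ (hq0 : 0 ≤ q) (hq1 : q < 1) (f : lp (fun _ : ℕ => ℂ) 2) (n : ℕ) :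
    (bOp hq0 hq1 f : ℕ → ℂ) (n+1) = (cseq q n : ℂ) * (f : ℕ → ℂ) n := rfl
end

section
variable {q : ℝ}
local notation "⟪" x ", " y "⟫" => @inner ℂ _ _ x y

lemma bOp_eq_adjoint (hq0 : 0 ≤ q) (hq1 : q < 1) :
    bOp hq0 hq1 = ContinuousLinearMap.adjoint (aOp hq0 hq1) := by
  rw [ContinuousLinearMap.eq_adjoint_iff]
  intro x y
  rw [lp.inner_eq_tsum, lp.inner_eq_tsum,
    Summable.tsum_eq_zero_add (lp.summable_inner (𝕜 := ℂ) (bOp hq0 hq1 x) y)]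
  have h0 : ⟪(bOp hq0 hq1 x : ℕ → ℂ) 0, (y : ℕ → ℂ) 0⟫ = 0 := by
    rw [bOp_apply_zero]; simp
  rw [h0, zero_add]
  apply tsum_congr
  intro n
  rw [bOp_apply_succ, aOp_apply]
  simp only [RCLike.inner_apply, map_mul, Complex.conj_ofReal]
  ring
end

theorem exists_q_annihilation_operator_on_l2
    (q : ℝ) (hq : q ∈ Set.Ioo (0 : ℝ) 1) :
    ∃ a : (lp (fun _ : ℕ => ℂ) 2) →L[ℂ] (lp (fun _ : ℕ => ℂ) 2),
      a (lp.single 2 0 1) = 0 ∧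
      (∀ n : ℕ, 1 ≤ n →
        a (lp.single 2 n 1) = ((Real.sqrt (qInt q n) : ℝ) : ℂ) • lp.single 2 (n - 1) 1) ∧
      (∀ n : ℕ,
        adjoint a (lp.single 2 n 1)
          = ((Real.sqrt (qInt q (n + 1)) : ℝ) : ℂ) • lp.single 2 (n + 1) 1) ∧
      a ∘L adjoint a - (q : ℂ) • (adjoint a ∘L a) = 1 ∧
      ‖a‖ = (1 - q) ^ (-(1 / 2) : ℝ) := by
  obtain ⟨hq0', hq1⟩ := hq
  have hq0 : (0:ℝ) ≤ q := le_of_lt hq0'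
  have h1q : (0:ℝ) < 1 - q := by linarith
  have hact : ∀ m : ℕ, aOp hq0 hq1 (lp.single 2 (m+1) 1)
      = ((Real.sqrt (qInt q (m+1)) : ℝ) : ℂ) • lp.single 2 m 1 := by
    intro m
    apply Subtype.ext
    funext k
    rw [aOp_apply]
    simp only [lp.coeFn_smul, Pi.smul_apply, smul_eq_mul]
    by_cases hk : k = m
    · subst hk
      simp [lp.single_apply, cseq]
    · have h1 : ¬ (k + 1 = m + 1) := by omega
      simp [lp.single_apply, hk, h1]
  have hnorm_single : ∀ m : ℕ, ‖(lp.single 2 m (1:ℂ) : lp (fun _ : ℕ => ℂ) 2)‖ = 1 := by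
    intro m
    simpa using lp.norm_single (p := 2) (by norm_num) (fun _ : ℕ => (1:ℂ)) m
  refine ⟨aOp hq0 hq1, ?_, ?_, ?_, ?_, ?_⟩
  · -- a e₀ = 0
    apply Subtype.ext
    funext k
    rw [aOp_apply]
    have h1 : ¬ (k + 1 = 0) := by omega
    simp [lp.single_apply, h1, lp.coeFn_zero]
  · -- action on eₙ, n ≥ 1
    intro n hn
    obtain ⟨m, rfl⟩ := Nat.exists_eq_add_of_le hn
    rw [show 1 + m = m + 1 by ring]
    simpa using hact m
  · -- adjoint action
    intro n
    rw [← bOp_eq_adjoint]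
    apply Subtype.ext
    funext k
    simp only [lp.coeFn_smul, Pi.smul_apply, smul_eq_mul]
    cases k with
    | zero =>
      rw [bOp_apply_zero]
      have h1 : ¬ ((0:ℕ) = n + 1) := by omega
      simp [lp.single_apply, h1]
    | succ m =>
      rw [bOp_apply_succ]
      by_cases hm : m = n
      · subst hm
        simp [lp.single_apply, cseq]
      · have h1 : ¬ (m + 1 = n + 1) := by omega
        simp [lp.single_apply, hm, h1]
  · -- commutation relation
    rw [← bOp_eq_adjoint]
    ext f k
    have hrec : ∀ m : ℕ, qInt q (m+1) = q * qInt q m + 1 := by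
      intro m
      simpa [qInt] using geom_sum_succ (x := q) (n := m)
    simp only [ContinuousLinearMap.sub_apply, ContinuousLinearMap.comp_apply,
      ContinuousLinearMap.smul_apply, ContinuousLinearMap.one_apply,
      lp.coeFn_sub, Pi.sub_apply, lp.coeFn_smul, Pi.smul_apply, smul_eq_mul]
    cases k with
    | zero =>
      rw [aOp_apply, bOp_apply_succ, bOp_apply_zero]
      have h0 : (cseq q 0 : ℝ) * cseq q 0 = 1 := by
        rw [cseq_sq q hq0 0]; simp [qInt]
      have hh : ((cseq q 0 : ℝ) : ℂ) * ((cseq q 0 : ℝ) : ℂ) = 1 := by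
        rw [← Complex.ofReal_mul, h0, Complex.ofReal_one]
      calc (cseq q 0 : ℂ) * ((cseq q 0 : ℂ) * (f : ℕ → ℂ) 0) - (q:ℂ) * 0
          = ((cseq q 0 : ℂ) * (cseq q 0 : ℂ)) * (f : ℕ → ℂ) 0 := by ring
        _ = (f : ℕ → ℂ) 0 := by rw [hh, one_mul]
    | succ m =>
      rw [aOp_apply, bOp_apply_succ, bOp_apply_succ, aOp_apply]
      have h1 : ((cseq q (m+1) : ℝ) : ℂ) * ((cseq q (m+1) : ℝ) : ℂ) = ((qInt q (m+2) : ℝ) : ℂ) := by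
        rw [← Complex.ofReal_mul, cseq_sq q hq0 (m+1)]
      have h2 : ((cseq q m : ℝ) : ℂ) * ((cseq q m : ℝ) : ℂ) = ((qInt q (m+1) : ℝ) : ℂ) := by
        rw [← Complex.ofReal_mul, cseq_sq q hq0 m]
      have h3 : ((qInt q (m+2) : ℝ) : ℂ) = (q:ℂ) * ((qInt q (m+1) : ℝ):ℂ) + 1 := by
        rw [show m+2 = (m+1)+1 by ring, hrec (m+1)]
        push_cast
        ring
      calc (cseq q (m+1) : ℂ) * ((cseq q (m+1) : ℂ) * (f : ℕ → ℂ) (m+1))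
            - (q:ℂ) * ((cseq q m : ℂ) * ((cseq q m : ℂ) * (f : ℕ → ℂ) (m+1)))
          = (((cseq q (m+1) : ℂ) * (cseq q (m+1) : ℂ))
              - (q:ℂ) * ((cseq q m : ℂ) * (cseq q m : ℂ))) * (f : ℕ → ℂ) (m+1) := by ring
        _ = (f : ℕ → ℂ) (m+1) := by
            rw [h1, h2, h3]; ring
  · -- norm
    have hCeq : Real.sqrt (1-q)⁻¹ = (1 - q) ^ (-(1 / 2) : ℝ) :=
      calc Real.sqrt (1-q)⁻¹ = (Real.sqrt (1-q))⁻¹ := Real.sqrt_inv _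
        _ = ((1-q) ^ ((1:ℝ)/2))⁻¹ := by rw [Real.sqrt_eq_rpow]
        _ = (1-q) ^ (-(1/2) : ℝ) := (Real.rpow_neg h1q.le _).symm
    rw [← hCeq]
    apply le_antisymm
    · exact (aOp hq0 hq1).opNorm_le_bound (Real.sqrt_nonneg _) (aLM_bound hq0 hq1)
    · have key : ∀ m : ℕ, Real.sqrt (qInt q (m+1)) ≤ ‖aOp hq0 hq1‖ := by
        intro m
        have h := (aOp hq0 hq1).le_opNorm (lp.single 2 (m+1) 1)
        rw [hact m, hnorm_single (m+1), mul_one, norm_smul] at h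
        rw [hnorm_single m, mul_one, Complex.norm_real, Real.norm_eq_abs,
          abs_of_nonneg (Real.sqrt_nonneg _)] at h
        exact h
      have hgeom : Filter.Tendsto (fun n => qInt q n) Filter.atTop (nhds (1-q)⁻¹) := by
        simpa [qInt] using (hasSum_geometric_of_lt_one hq0 hq1).tendsto_sum_nat
      have hsq : Filter.Tendsto (fun n => Real.sqrt (qInt q n)) Filter.atTop
          (nhds (Real.sqrt (1-q)⁻¹)) :=
        (Real.continuous_sqrt.tendsto _).comp hgeom
      refine le_of_tendsto' hsq ?_
      intro n
      cases n with
      | zero =>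
        have h0 : qInt q 0 = 0 := by simp [qInt]
        rw [h0, Real.sqrt_zero]
        exact norm_nonneg _
      | succ m => exact key m
end
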